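/- arXiv:math/0407270 — 13 statements merged into one kernel-verified Lean document; each statement's English description precedes it below -/
import Mathlib

section
/- Let R be a commutative Noetherian ring. Then R is Artinian if and only if every nonzero R-module is good. -/
open Function

universe u v w

def IsPrimarySubmodule {R : Type u} [CommRing R] {M : Type v} [AddCommGroup M]
    [Module R M] (Q : Submodule R M) : Prop :=
  Q ≠ ⊤ ∧ ∀ x : R,
    Function.Injective (fun m : M ⧸ Q => x • m) ∨ ∃ n : ℕ, ∀ m : M ⧸ Q, x ^ n • m = 0

def IsGood (R : Type u) (M : Type v) [CommRing R] [AddCommGroup M] [Module R M] : Prop :=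
  ∃ (k : ℕ) (Q : Fin k → Submodule R M),
    (∀ i, IsPrimarySubmodule (Q i)) ∧ (⨅ i, Q i) = ⊥

section Aux

variable {R : Type u} [CommRing R]

/-- A Noetherian module killed by a maximal ideal is Artinian. -/
lemma isArtinian_of_maximal_kill (m : Ideal R) (hm : m.IsMaximal)
    (M : Type v) [AddCommGroup M] [Module R M] [IsNoetherian R M]
    (h : ∀ a ∈ m, ∀ z : M, a • z = 0) : IsArtinian R M := by
  haveI : IsSimpleModule R (R ⧸ m) :=
    isSimpleModule_iff_isCoatom.mpr (Ideal.isMaximal_def.mp hm)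
  haveI hart : IsArtinian R (R ⧸ m) := inferInstance
  obtain ⟨n, f, hf⟩ := Module.Finite.exists_fin' R M
  let ρ : (Fin n → R) →ₗ[R] (Fin n → R ⧸ m) :=
    LinearMap.pi fun i => m.mkQ.comp (LinearMap.proj i)
  have hρ : Function.Surjective ρ := by
    intro c
    choose d hd using fun i => Submodule.Quotient.mk_surjective m (c i)
    exact ⟨d, funext fun i => hd i⟩
  have hker : LinearMap.ker ρ ≤ LinearMap.ker f := by
    intro c hc
    have hc' : ∀ i, c i ∈ m := by
      intro i
      have := congrFun (LinearMap.mem_ker.mp hc) i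
      simpa [ρ, Ideal.Quotient.eq_zero_iff_mem] using this
    have hc2 : c = ∑ i, c i • (Pi.single i (1 : R) : Fin n → R) := by
      ext j
      simp [Pi.single_apply, Finset.sum_apply, smul_eq_mul, mul_ite]
    rw [LinearMap.mem_ker, hc2, map_sum]
    refine Finset.sum_eq_zero fun i _ => ?_
    rw [map_smul]
    exact h (c i) (hc' i) _
  let e := (ρ.quotKerEquivOfSurjective hρ).symm
  let σ : (Fin n → R ⧸ m) →ₗ[R] M :=
    ((LinearMap.ker ρ).liftQ f hker).comp e.toLinearMap
  have hσ : Function.Surjective σ := by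
    have h1 : Function.Surjective ((LinearMap.ker ρ).liftQ f hker) := by
      intro z
      obtain ⟨c, rfl⟩ := hf z
      exact ⟨Submodule.Quotient.mk c, rfl⟩
    exact fun z => by
      obtain ⟨w, hw⟩ := h1 z
      obtain ⟨v, hv⟩ := e.surjective w
      exact ⟨v, by simp [σ, hv, hw]⟩
  exact isArtinian_of_surjective _ σ hσ

/-- A Noetherian module killed by a product of maximal ideals is Artinian. -/
lemma isArtinian_of_multiset_prod (s : Multiset (Ideal R)) :
    ∀ (_ : ∀ I ∈ s, Ideal.IsMaximal I) (M : Type v) [AddCommGroup M] [Module R M]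
      [IsNoetherian R M] (_ : ∀ a ∈ s.prod, ∀ z : M, a • z = 0), IsArtinian R M := by
  induction s using Multiset.induction_on with
  | empty =>
    intro _ M _ _ _ h
    have hz : ∀ z : M, z = 0 := by
      intro z
      have := h 1 (by simp) z
      simpa using this
    haveI : Subsingleton M := ⟨fun a b => by rw [hz a, hz b]⟩
    infer_instance
  | cons m t ih =>
    intro hs M _ _ _ h
    have hm : m.IsMaximal := hs m (Multiset.mem_cons_self m t)
    have ht : ∀ I ∈ t, I.IsMaximal := fun I hI => hs I (Multiset.mem_cons_of_mem hI)
    set N : Submodule R M := t.prod • (⊤ : Submodule R M) with hN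
    have hNkill : ∀ a ∈ m, ∀ z : ↥N, a • z = 0 := by
      intro a ha z
      have hz : (z : M) ∈ t.prod • (⊤ : Submodule R M) := z.2
      apply Subtype.ext
      show a • (z : M) = 0
      refine Submodule.smul_induction_on hz ?_ ?_
      · intro r hr x _
        rw [smul_smul]
        refine h (a * r) ?_ x
        rw [Multiset.prod_cons]
        exact Ideal.mul_mem_mul ha hr
      · intro x y hx hy
        rw [smul_add, hx, hy, add_zero]
    haveI hNart : IsArtinian R ↥N := isArtinian_of_maximal_kill m hm ↥N hNkill
    have hQkill : ∀ a ∈ t.prod, ∀ z : M ⧸ N, a • z = 0 := by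
      intro a ha z
      obtain ⟨w, rfl⟩ := Submodule.Quotient.mk_surjective N z
      rw [← Submodule.Quotient.mk_smul, Submodule.Quotient.mk_eq_zero]
      exact Submodule.smul_mem_smul ha Submodule.mem_top
    haveI hQart : IsArtinian R (M ⧸ N) := ih ht (M ⧸ N) hQkill
    exact isArtinian_of_range_eq_ker N.subtype N.mkQ
      (by rw [Submodule.range_subtype, Submodule.ker_mkQ])

/-- Akizuki: a Noetherian commutative ring in which every prime is maximal is Artinian. -/
lemma akizuki [IsNoetherianRing R] (hp : ∀ p : Ideal R, p.IsPrime → p.IsMaximal) :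
    IsArtinianRing R := by
  obtain ⟨n, hn⟩ := IsNoetherianRing.isNilpotent_nilradical R
  have hfin : (minimalPrimes R).Finite := minimalPrimes.finite_of_isNoetherianRing R
  classical
  let F : Finset (Ideal R) := hfin.toFinset
  have hFprime : ∀ p ∈ F, p.IsPrime := fun p hp' =>
    (hfin.mem_toFinset.mp hp').1.1
  have hFmax : ∀ p ∈ F, p.IsMaximal := fun p h' => hp p (hFprime p h')
  have hprod : F.prod id ≤ nilradical R := by
    rw [nilradical_eq_sInf]
    refine le_sInf fun q hq => ?_
    haveI : q.IsPrime := hq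
    obtain ⟨p, hpmem, hpq⟩ := Ideal.exists_minimalPrimes_le (bot_le : (⊥ : Ideal R) ≤ q)
    calc F.prod id ≤ F.inf id := Ideal.prod_le_inf
      _ ≤ p := Finset.inf_le (hfin.mem_toFinset.mpr hpmem)
      _ ≤ q := hpq
  set s : Multiset (Ideal R) := (n + 1) • F.1 with hs
  have hsmax : ∀ I ∈ s, I.IsMaximal := fun I hI =>
    hFmax I (Multiset.mem_of_mem_nsmul hI)
  have hsprod : s.prod ≤ ⊥ := by
    rw [hs, Multiset.prod_nsmul]
    have h1 : F.1.prod = F.prod id := by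
      rw [Finset.prod_eq_multiset_prod, Multiset.map_id]
    calc F.1.prod ^ (n + 1) ≤ (nilradical R) ^ (n + 1) := by
          rw [h1]; exact Ideal.pow_right_mono hprod _
      _ = (nilradical R) ^ n * nilradical R := by rw [pow_succ]
      _ = ⊥ := by rw [hn]; simp
  rw [isArtinianRing_iff]
  exact isArtinian_of_multiset_prod s hsmax R
    (fun a ha z => by
      have : a = 0 := (Submodule.mem_bot R).mp (hsprod ha)
      rw [this, zero_smul])

variable (M : Type v) [AddCommGroup M] [Module R M]

/-- The kernel of the localization map at a prime `m`. -/
def locKer (m : Ideal R) (hm : m.IsPrime) : Submodule R M where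
  carrier := {z | ∃ s, s ∉ m ∧ s • z = 0}
  add_mem' := by
    rintro a b ⟨s, hs, hsa⟩ ⟨t, ht, htb⟩
    refine ⟨s * t, fun hmem => (hm.mem_or_mem hmem).elim hs ht, ?_⟩
    have h1 : (s * t) • a = 0 := by rw [mul_comm, mul_smul, hsa, smul_zero]
    have h2 : (s * t) • b = 0 := by rw [mul_smul, htb, smul_zero]
    rw [smul_add, h1, h2, add_zero]
  zero_mem' :=
    ⟨1, fun h1 => hm.ne_top ((Ideal.eq_top_iff_one _).mpr h1), smul_zero 1⟩
  smul_mem' := by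
    rintro r z ⟨s, hs, hsz⟩
    exact ⟨s, hs, by rw [smul_comm, hsz, smul_zero]⟩

lemma mem_locKer {m : Ideal R} {hm : m.IsPrime} {z : M} :
    z ∈ locKer M m hm ↔ ∃ s, s ∉ m ∧ s • z = 0 := Iff.rfl

lemma locKer_primary [IsArtinianRing R] (m : Ideal R) (hm : m.IsPrime)
    (hne : locKer M m hm ≠ ⊤) : IsPrimarySubmodule (locKer M m hm) := by
  refine ⟨hne, fun x => ?_⟩
  by_cases hx : x ∈ m
  · right
    have hmono : ∀ a b : ℕ, a ≤ b → Ideal.span {x ^ b} ≤ Ideal.span {x ^ a} := by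
      intro a b hab
      rw [Ideal.span_singleton_le_span_singleton]
      exact pow_dvd_pow x hab
    let f : ℕ →o (Ideal R)ᵒᵈ := ⟨fun k => Ideal.span {x ^ k}, fun a b hab => hmono a b hab⟩
    obtain ⟨n, hnstab⟩ := IsArtinian.monotone_stabilizes f
    have hx' : x ^ n ∈ Ideal.span {x ^ (n + 1)} := by
      have := hnstab (n + 1) (Nat.le_succ n)
      have heq : Ideal.span {x ^ n} = Ideal.span {x ^ (n + 1)} := this
      rw [← heq]
      exact Ideal.subset_span rfl
    obtain ⟨c, hc⟩ := Ideal.mem_span_singleton'.mp hx'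
    refine ⟨n, fun mm => ?_⟩
    obtain ⟨z, rfl⟩ := Submodule.Quotient.mk_surjective _ mm
    rw [← Submodule.Quotient.mk_smul, Submodule.Quotient.mk_eq_zero]
    refine ⟨1 - c * x, fun hmem => ?_, ?_⟩
    · have h1 : (1 : R) ∈ m := by
        have := m.add_mem hmem (m.mul_mem_left c hx)
        simpa using this
      exact hm.ne_top ((Ideal.eq_top_iff_one _).mpr h1)
    · rw [smul_smul]
      have hz : (1 - c * x) * x ^ n = 0 := by
        have : (1 - c * x) * x ^ n = x ^ n - c * x ^ (n + 1) := by ring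
        rw [this, ← hc]; ring
      rw [hz, zero_smul]
  · left
    intro a b hab
    obtain ⟨u, rfl⟩ := Submodule.Quotient.mk_surjective _ a
    obtain ⟨v, rfl⟩ := Submodule.Quotient.mk_surjective _ b
    simp only at hab
    have h0 : x • (u - v) ∈ locKer M m hm := by
      rw [← Submodule.Quotient.mk_eq_zero, Submodule.Quotient.mk_smul]
      have : (Submodule.Quotient.mk (u - v) : M ⧸ locKer M m hm) =
          Submodule.Quotient.mk u - Submodule.Quotient.mk v := by
        rw [Submodule.Quotient.mk_sub]
      rw [this, smul_sub, hab, sub_self]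
    obtain ⟨s, hs, hsz⟩ := h0
    have huv : u - v ∈ locKer M m hm := by
      refine ⟨s * x, fun hmem => (hm.mem_or_mem hmem).elim hs hx, ?_⟩
      rw [mul_smul]
      exact hsz
    exact (Submodule.Quotient.eq _).mpr huv

end Aux

theorem artinian_iff_forall_nontrivial_isGood (R : Type u) [CommRing R]
    [IsNoetherianRing R] :
    IsArtinianRing R ↔
      ∀ (M : Type u) [AddCommGroup M] [Module R M], Nontrivial M → IsGood R M := by
  constructor
  · intro hart M _ _ _
    classical
    have hfin : {m : Ideal R | m.IsMaximal}.Finite := IsArtinianRing.setOfPred_isMaximal_finite R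
    let S := {m : Ideal R | ∃ hm : m.IsMaximal, locKer M m hm.isPrime ≠ ⊤}
    have hSfin : S.Finite := hfin.subset (by rintro m ⟨hm, -⟩; exact hm)
    haveI := hSfin.fintype
    let e := (Fintype.equivFin ↥S).symm
    refine ⟨Fintype.card ↥S,
      fun i => locKer M (e i).1 ((e i).2.choose.isPrime), fun i => ?_, ?_⟩
    · exact locKer_primary M (e i).1 ((e i).2.choose.isPrime) (e i).2.choose_spec
    · rw [eq_bot_iff]
      intro z hz
      have hz' : ∀ (md : Ideal R) (hmd : md.IsMaximal), z ∈ locKer M md hmd.isPrime := by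
        intro md hmd
        by_cases hcase : locKer M md hmd.isPrime = ⊤
        · rw [hcase]; exact Submodule.mem_top
        · have hmem : md ∈ S := ⟨hmd, hcase⟩
          have hmem2 := (Submodule.mem_iInf _).mp hz (e.symm ⟨md, hmem⟩)
          have key : z ∈ (fun X : ↥S => locKer M X.1 (X.2.choose.isPrime))
              (e (e.symm ⟨md, hmem⟩)) := hmem2
          rw [Equiv.apply_symm_apply] at key
          exact key
      let Ann : Ideal R := LinearMap.ker (LinearMap.toSpanSingleton R M z)
      have hAnnTop : Ann = ⊤ := by
        by_contra hAnn
        obtain ⟨md, hmd, hle⟩ := Ideal.exists_le_maximal Ann hAnn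
        obtain ⟨s, hs, hsz⟩ := hz' md hmd
        refine hs (hle ?_)
        rw [LinearMap.mem_ker, LinearMap.toSpanSingleton_apply]
        exact hsz
      have h1 : (1 : R) ∈ Ann := hAnnTop ▸ Submodule.mem_top
      have := LinearMap.mem_ker.mp h1
      rw [LinearMap.toSpanSingleton_apply, one_smul] at this
      rw [Submodule.mem_bot]
      exact this
  · intro h
    apply akizuki
    intro p hp
    by_contra hnm
    obtain ⟨m, hm, hpm⟩ := Ideal.exists_le_maximal p hp.ne_top
    have hne : p ≠ m := fun hEq => hnm (hEq ▸ hm)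
    obtain ⟨x, hxm, hxp⟩ := SetLike.exists_of_lt (lt_of_le_of_ne hpm hne)
    classical
    let Nid : ℕ → Ideal R := fun n => p ⊔ Ideal.span {x ^ (n + 1)}
    have h1 : ∀ n, Nid n ≤ m := by
      intro n
      refine sup_le hpm ?_
      rw [Ideal.span_singleton_le_iff_mem]
      exact m.pow_mem_of_mem hxm (n + 1) (Nat.succ_pos n)
    have hxnp : ∀ n : ℕ, x ^ n ∉ p := fun n hc => hxp (hp.mem_of_pow_mem n hc)
    have h2 : ∀ n, x ^ n ∉ Nid n := by
      intro n hmem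
      rw [Submodule.mem_sup] at hmem
      obtain ⟨q, hq, r, hr, hqr⟩ := hmem
      obtain ⟨c, hc⟩ := Ideal.mem_span_singleton'.mp hr
      have hkey : x ^ n * (1 - c * x) ∈ p := by
        have : x ^ n * (1 - c * x) = x ^ n - c * x ^ (n + 1) := by ring
        rw [this, hc, ← hqr]
        simpa using hq
      rcases hp.mem_or_mem hkey with hc1 | hc2
      · exact hxnp n hc1
      · have : (1 : R) ∈ m := by
          have := m.add_mem (hpm hc2) (m.mul_mem_left c hxm)
          simpa using this
        exact hm.ne_top ((Ideal.eq_top_iff_one _).mpr this)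
    let M := DirectSum ℕ (fun n => R ⧸ Nid n)
    let eg : ℕ → M := fun n =>
      DirectSum.lof R ℕ (fun n => R ⧸ Nid n) n (Submodule.Quotient.mk 1)
    have hlof_smul : ∀ (n : ℕ) (r : R),
        r • eg n = DirectSum.lof R ℕ (fun n => R ⧸ Nid n) n (Submodule.Quotient.mk r) := by
      intro n r
      rw [← LinearMap.map_smul]
      congr 1
      rw [← Submodule.Quotient.mk_smul, smul_eq_mul, mul_one]
    have hlof_ne : ∀ (n : ℕ) (r : R), r ∉ Nid n →
        DirectSum.lof R ℕ (fun n => R ⧸ Nid n) n (Submodule.Quotient.mk r) ≠ 0 := by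
      intro n r hr hc
      have := congrArg (fun z : M => z n) hc
      simp only [DirectSum.lof_apply] at this
      rw [show ((0 : M) n) = 0 from rfl, Submodule.Quotient.mk_eq_zero] at this
      exact hr this
    have hMnt : Nontrivial M :=
      ⟨eg 0, 0, hlof_ne 0 1 (fun hc => hm.ne_top ((Ideal.eq_top_iff_one _).mpr (h1 0 hc)))⟩
    obtain ⟨k, Q, hQ, hinf⟩ := h M hMnt
    have hx_kill : ∀ n : ℕ, x ^ (n + 1) • eg n = 0 := by
      intro n
      rw [hlof_smul]
      have : (Submodule.Quotient.mk (x ^ (n + 1)) : R ⧸ Nid n) = 0 := by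
        rw [Submodule.Quotient.mk_eq_zero]
        exact Submodule.mem_sup_right (Ideal.subset_span rfl)
      rw [this, map_zero]
    have hx_surv : ∀ n : ℕ, x ^ n • eg n ≠ 0 := by
      intro n
      rw [hlof_smul]
      exact hlof_ne n (x ^ n) (h2 n)
    have hnil : ∀ i : Fin k, ∃ n : ℕ, ∀ mm : M ⧸ Q i, x ^ n • mm = 0 := by
      intro i
      rcases (hQ i).2 x with hinj | hnil
      · exfalso
        have hinj' : ∀ j : ℕ, Function.Injective (fun mm : M ⧸ Q i => x ^ j • mm) := by
          intro j
          induction j with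
          | zero => intro a b hab; simpa using hab
          | succ j ihj =>
            intro a b hab
            simp only [pow_succ, mul_comm, mul_smul] at hab
            exact ihj (hinj hab)
        have hei : ∀ n : ℕ, eg n ∈ Q i := by
          intro n
          have hkill : x ^ (n + 1) • (Submodule.Quotient.mk (eg n) : M ⧸ Q i) = 0 := by
            rw [← Submodule.Quotient.mk_smul, hx_kill n]
            rfl
          have := hinj' (n + 1) (a₁ := Submodule.Quotient.mk (eg n)) (a₂ := 0)
            (by simpa [smul_zero] using hkill)
          rwa [Submodule.Quotient.mk_eq_zero] at this
        apply (hQ i).1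
        rw [eq_top_iff]
        intro z _
        refine DirectSum.induction_on z (Submodule.zero_mem _) ?_
          (fun a b ha hb => Submodule.add_mem _ ha hb)
        intro n b
        obtain ⟨r, rfl⟩ := Submodule.Quotient.mk_surjective _ b
        have : DirectSum.of (fun n => R ⧸ Nid n) n (Submodule.Quotient.mk r) = r • eg n := by
          rw [hlof_smul, DirectSum.lof_eq_of]
        rw [this]
        exact Submodule.smul_mem _ r (hei n)
      · exact hnil
    choose g hg using hnil
    let Nn : ℕ := Finset.univ.sup g
    have hkey : x ^ Nn • eg Nn = 0 := by
      rw [← Submodule.mem_bot (R := R), ← hinf, Submodule.mem_iInf]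
      intro i
      have hle : g i ≤ Nn := Finset.le_sup (Finset.mem_univ i)
      rw [← Submodule.Quotient.mk_eq_zero, Submodule.Quotient.mk_smul]
      have hsplit : ∀ mm : M ⧸ Q i, x ^ Nn • mm = 0 := by
        intro mm
        have : x ^ Nn • mm = x ^ (Nn - g i) • (x ^ (g i) • mm) := by
          rw [smul_smul, ← pow_add, Nat.sub_add_cancel hle]
        rw [this, hg i mm, smul_zero]
      exact hsplit _
    exact hx_surv Nn hkey
end

section
/- Let R be a commutative Noetherian ring. Then R is Artinian if and only if every R-module is semi Hopfian. -/
open Function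

universe u v w

def SemiHopfian (R : Type u) (M : Type v) [CommRing R] [AddCommGroup M]
    [Module R M] : Prop :=
  ∀ x : R, Function.Surjective (fun m : M => x • m) → Function.Bijective (fun m : M => x • m)

section Aux

set_option synthInstance.maxHeartbeats 800000

/-- If `d` is a nonzero element of a domain `D` that is an `R`-algebra, `x` is a lift of `d`,
and the `R`-module `D[1/d] ⧸ D` is semi-Hopfian, then `d` is a unit. -/
lemma aux_isUnit {R D : Type u} [CommRing R] [CommRing D] [IsDomain D] [Algebra R D]
    (d : D) (hd : d ≠ 0) (x : R) (hx : algebraMap R D x = d)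
    (H : SemiHopfian R ((Localization (Submonoid.powers d)) ⧸
      (LinearMap.range (Algebra.linearMap D (Localization (Submonoid.powers d)))))) :
    IsUnit d := by
  set L : Type u := Localization (Submonoid.powers d) with hL
  set N : Submodule D L := LinearMap.range (Algebra.linearMap D L) with hN
  have hdu : IsUnit (algebraMap D L d) :=
    IsLocalization.map_units L (⟨d, Submonoid.mem_powers d⟩ : Submonoid.powers d)
  have hsmul : ∀ (m : L ⧸ N), x • m = d • m := by
    intro m
    obtain ⟨l, rfl⟩ := Submodule.Quotient.mk_surjective N m
    rw [← Submodule.Quotient.mk_smul, ← Submodule.Quotient.mk_smul]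
    congr 1
    have h1 : x • l = algebraMap R D x • l := (algebraMap_smul D x l).symm
    rw [hx] at h1
    exact h1
  have hLsmul : ∀ (z : L), d • z = algebraMap D L d * z := fun z => Algebra.smul_def d z
  have hsurj : Function.Surjective (fun m : L ⧸ N => x • m) := by
    intro m
    obtain ⟨l, rfl⟩ := Submodule.Quotient.mk_surjective N m
    obtain ⟨u, hu⟩ := hdu
    refine ⟨Submodule.Quotient.mk ((u⁻¹ : Lˣ) * l), ?_⟩
    simp only [hsmul, ← Submodule.Quotient.mk_smul]
    congr 1
    rw [hLsmul, ← hu, ← mul_assoc, Units.mul_inv, one_mul]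
  have hinj := (H x hsurj).1
  set e : L := IsLocalization.mk' L 1 (⟨d, Submonoid.mem_powers d⟩ : Submonoid.powers d) with he'
  have hde : algebraMap D L d * e = 1 := by
    rw [he', IsLocalization.mul_mk'_eq_mk'_of_mul, mul_one, IsLocalization.mk'_self]
  have he : x • (Submodule.Quotient.mk e : L ⧸ N) = 0 := by
    rw [hsmul, ← Submodule.Quotient.mk_smul, Submodule.Quotient.mk_eq_zero]
    refine ⟨1, ?_⟩
    simp only [Algebra.linearMap_apply, map_one]
    rw [hLsmul, hde]
  have h0 : (Submodule.Quotient.mk e : L ⧸ N) = 0 := by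
    have h2 : x • (0 : L ⧸ N) = 0 := smul_zero x
    exact hinj (he.trans h2.symm)
  rw [Submodule.Quotient.mk_eq_zero] at h0
  obtain ⟨c, hc⟩ := h0
  simp only [Algebra.linearMap_apply] at hc
  have hinjD : Function.Injective (algebraMap D L) :=
    IsLocalization.injective L (powers_le_nonZeroDivisors_of_noZeroDivisors hd)
  refine IsUnit.of_mul_eq_one (a := d) c (hinjD ?_)
  rw [map_mul, map_one, hc]; exact hde

/-- A Noetherian module annihilated by a product of maximal ideals is Artinian. -/
lemma isArtinian_of_multiset_prod_smul_eq_bot {R : Type u} [CommRing R]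
    (s : Multiset (Ideal R)) (hs : ∀ I ∈ s, I.IsMaximal) :
    ∀ (M : Type v) [AddCommGroup M] [Module R M] [IsNoetherian R M],
      s.prod • (⊤ : Submodule R M) = ⊥ → IsArtinian R M := by
  induction s using Multiset.induction_on with
  | empty =>
    intro M _ _ _ h
    rw [Multiset.prod_zero, Ideal.one_eq_top, Submodule.top_smul] at h
    haveI : Subsingleton M := by
      constructor
      intro a b
      have ha : a ∈ (⊥ : Submodule R M) := h ▸ Submodule.mem_top
      have hb : b ∈ (⊥ : Submodule R M) := h ▸ Submodule.mem_top
      rw [Submodule.mem_bot] at ha hb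
      rw [ha, hb]
    exact isArtinian_of_finite
  | cons I t ih =>
    intro M _ _ _ h
    have hI : I.IsMaximal := hs I (Multiset.mem_cons_self I t)
    have ht : ∀ J ∈ t, J.IsMaximal := fun J hJ => hs J (Multiset.mem_cons_of_mem hJ)
    rw [Multiset.prod_cons] at h
    set N : Submodule R M := t.prod • ⊤ with hN
    have hIN : I • N = ⊥ := by rw [hN, ← mul_smul]; exact h
    -- quotient is Artinian by induction
    have hq : t.prod • (⊤ : Submodule R (M ⧸ N)) = ⊥ := by
      rw [eq_bot_iff]
      rintro x hx
      have htop : (⊤ : Submodule R (M ⧸ N)) = Submodule.map N.mkQ ⊤ := by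
        rw [Submodule.map_top, Submodule.range_mkQ]
      rw [htop, ← Submodule.map_smul''] at hx
      obtain ⟨m, hm, rfl⟩ := hx
      rw [Submodule.mem_bot, Submodule.mkQ_apply, Submodule.Quotient.mk_eq_zero]
      exact hm
    haveI hqa : IsArtinian R (M ⧸ N) := ih ht (M ⧸ N) hq
    -- N is Artinian: f.d. vector space over R ⧸ I
    have htor : Module.IsTorsionBySet R N (I : Set R) := by
      intro n i
      have h0 : (i : R) • (n : M) = 0 := by
        have hmem : (i : R) • (n : M) ∈ I • N := Submodule.smul_mem_smul i.2 n.2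
        rw [hIN] at hmem
        exact (Submodule.mem_bot R).mp hmem
      ext
      exact h0
    letI : Module (R ⧸ I) N := htor.module
    haveI : IsScalarTower R (R ⧸ I) N := htor.isScalarTower
    letI : Field (R ⧸ I) := Ideal.Quotient.field I
    haveI hart : IsArtinianRing (R ⧸ I) := inferInstance
    haveI : IsNoetherian (R ⧸ I) N := isNoetherian_of_tower R inferInstance
    haveI : Module.Finite (R ⧸ I) N := Module.finite_def.mpr (IsNoetherian.noetherian ⊤)
    haveI hart2 : IsArtinian (R ⧸ I) N := isArtinian_of_fg_of_artinian' (R := R ⧸ I)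
    haveI hna : IsArtinian R N := by
      rw [isArtinian_iff]
      let g : Submodule R N → Submodule (R ⧸ I) N := fun P =>
        { carrier := P
          add_mem' := fun ha hb => P.add_mem ha hb
          zero_mem' := P.zero_mem
          smul_mem' := fun c n hn => by
            obtain ⟨r, rfl⟩ := Ideal.Quotient.mk_surjective c
            have hrn : (Ideal.Quotient.mk I r) • n = r • n := by
              rw [← Ideal.Quotient.algebraMap_eq, algebraMap_smul]
            rw [hrn]
            exact P.smul_mem r hn }
      have hle : ∀ P Q : Submodule R N, g P ≤ g Q ↔ P ≤ Q := fun P Q => Iff.rfl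
      have hmono : StrictMono g := fun P Q h =>
        lt_of_le_not_ge ((hle P Q).mpr h.le) (fun hc => h.not_ge ((hle Q P).mp hc))
      exact (RelHomClass.isWellFounded
        (⟨⟨g, fun P Q h => le_antisymm ((hle P Q).mpr h.le) ((hle Q P).mpr h.ge)⟩,
          fun {P Q} => ⟨fun h => lt_of_le_not_ge ((hle P Q).mp h.le)
            (fun hc => h.not_ge ((hle Q P).mpr hc)), fun h => hmono h⟩⟩ :
          ((· < ·) : Submodule R N → Submodule R N → Prop) ↪r
          ((· < ·) : Submodule (R ⧸ I) N → Submodule (R ⧸ I) N → Prop))).wf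
    exact (isArtinian_iff_submodule_quotient N).mpr ⟨hna, hqa⟩

end Aux

theorem artinian_iff_forall_semiHopfian (R : Type u) [CommRing R]
    [IsNoetherianRing R] :
    IsArtinianRing R ↔
      ∀ (M : Type u) [AddCommGroup M] [Module R M], SemiHopfian R M := by
  constructor
  · intro hart M _ _ x hsurj
    refine ⟨?_, hsurj⟩
    -- the chain (x^n) stabilizes in R
    obtain ⟨n, y, hny⟩ := IsArtinian.exists_pow_succ_smul_dvd (M := R) x 1
    have hxy : x ^ (n + 1) * y = x ^ n := by
      simpa [smul_eq_mul] using hny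
    -- every element of M is divisible by x^n
    have hdiv : ∀ (k : ℕ) (m : M), ∃ m', m = x ^ k • m' := by
      intro k
      induction k with
      | zero => exact fun m => ⟨m, by rw [pow_zero, one_smul]⟩
      | succ k ihk =>
        intro m
        obtain ⟨m', hm'⟩ := ihk m
        obtain ⟨m'', hm''⟩ := hsurj m'
        refine ⟨m'', ?_⟩
        simp only at hm''
        rw [hm', ← hm'', pow_succ, mul_smul, smul_comm]
    -- kernel of x-multiplication is zero
    have hker : ∀ m : M, x • m = 0 → m = 0 := by
      intro m hm
      obtain ⟨m', hm'⟩ := hdiv n m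
      have : m = (x ^ (n + 1) * y) • m' := by rw [hxy, hm']
      calc m = (x ^ (n + 1) * y) • m' := this
        _ = y • (x • (x ^ n • m')) := by
            simp only [smul_smul]
            congr 1
            ring
        _ = y • (x • m) := by rw [← hm']
        _ = 0 := by rw [hm, smul_zero]
    intro a b hab
    simp only at hab
    have : x • (a - b) = 0 := by rw [smul_sub, hab, sub_self]
    have := hker _ this
    exact sub_eq_zero.mp this
  · intro H
    -- every prime ideal is maximal
    have hmax : ∀ (p : Ideal R), p.IsPrime → p.IsMaximal := by
      intro p hp
      apply Ideal.Quotient.maximal_of_isField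
      refine ⟨⟨0, 1, zero_ne_one⟩, mul_comm, ?_⟩
      intro d hd
      obtain ⟨x, hx⟩ := Ideal.Quotient.mk_surjective (I := p) d
      have hx' : algebraMap R (R ⧸ p) x = d := by
        rw [Ideal.Quotient.algebraMap_eq]; exact hx
      have hu : IsUnit d := aux_isUnit d hd x hx' (H _)
      obtain ⟨b, hb⟩ := hu.exists_right_inv
      exact ⟨b, hb⟩
    -- ⊥ contains a product of primes, which are all maximal
    obtain ⟨Z, hZ⟩ := PrimeSpectrum.exists_primeSpectrum_prod_le (R := R) ⊥
    have hs : ∀ I ∈ Z.map PrimeSpectrum.asIdeal, I.IsMaximal := by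
      intro I hI
      obtain ⟨pt, _, rfl⟩ := Multiset.mem_map.mp hI
      exact hmax pt.asIdeal pt.2
    have hbot : (Z.map PrimeSpectrum.asIdeal).prod = ⊥ := le_bot_iff.mp hZ
    have hsmul : (Z.map PrimeSpectrum.asIdeal).prod • (⊤ : Submodule R R) = ⊥ := by
      rw [hbot, Submodule.bot_smul]
    exact isArtinian_of_multiset_prod_smul_eq_bot (Z.map PrimeSpectrum.asIdeal) hs R hsmul
end

section
/- Let R be a commutative Noetherian ring. Then R is Artinian if and only if every nonzero R-module is representable. -/
open Function

universe u v w

def IsSecondarySubmodule {R : Type u} [CommRing R] {M : Type v} [AddCommGroup M]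
    [Module R M] (S : Submodule R M) : Prop :=
  S ≠ ⊥ ∧ ∀ x : R,
    (∀ s ∈ S, ∃ t ∈ S, x • t = s) ∨ ∃ n : ℕ, ∀ s ∈ S, x ^ n • s = 0

def IsRepresentable (R : Type u) (M : Type v) [CommRing R] [AddCommGroup M]
    [Module R M] : Prop :=
  ∃ (k : ℕ) (S : Fin k → Submodule R M),
    (∀ i, IsSecondarySubmodule (S i)) ∧ (⨆ i, S i) = ⊤

section Aux

variable {R : Type u} [CommRing R]

/-- Extend an `R`-submodule to an `R ⧸ I`-submodule when the action factors. -/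
def quotModuleSubmodule (I : Ideal R) {M : Type v} [AddCommGroup M]
    [Module (R ⧸ I) M] [Module R M] [IsScalarTower R (R ⧸ I) M] (N : Submodule R M) :
    Submodule (R ⧸ I) M where
  carrier := N
  add_mem' := fun h1 h2 => N.add_mem h1 h2
  zero_mem' := N.zero_mem
  smul_mem' := by
    intro c x hx
    obtain ⟨r, rfl⟩ := Ideal.Quotient.mk_surjective c
    rw [← Ideal.Quotient.algebraMap_eq, algebraMap_smul]
    exact N.smul_mem r hx

theorem isArtinian_of_quot_tower (I : Ideal R) {M : Type v} [AddCommGroup M]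
    [Module (R ⧸ I) M] [Module R M] [IsScalarTower R (R ⧸ I) M]
    (h : IsArtinian (R ⧸ I) M) : IsArtinian R M := by
  refine ⟨RelEmbedding.wellFounded
    (⟨⟨fun N => quotModuleSubmodule I N, fun N N' hNN' => ?_⟩, ?_⟩ :
      ((· < ·) : Submodule R M → Submodule R M → Prop) ↪r
      ((· < ·) : Submodule (R ⧸ I) M → Submodule (R ⧸ I) M → Prop)) h.wf⟩
  · have := congrArg (fun (P : Submodule (R ⧸ I) M) => (P : Set M)) hNN'
    exact SetLike.ext' this
  · intro N N'
    constructor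
    · intro hlt
      rw [lt_iff_le_not_ge] at hlt ⊢
      exact ⟨fun x hx => hlt.1 hx, fun hcon => hlt.2 fun x hx => hcon hx⟩
    · intro hlt
      rw [lt_iff_le_not_ge] at hlt ⊢
      exact ⟨fun x hx => hlt.1 hx, fun hcon => hlt.2 fun x hx => hcon hx⟩

theorem isArtinian_of_prod_maximal :
    ∀ (l : List (Ideal R)), (∀ I ∈ l, I.IsMaximal) →
    ∀ (M : Type v) [AddCommGroup M] [Module R M] [IsNoetherian R M],
      l.prod • (⊤ : Submodule R M) = ⊥ → IsArtinian R M := by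
  intro l
  induction l with
  | nil =>
    intro _ M _ _ _ h
    rw [List.prod_nil, Ideal.one_eq_top, Submodule.top_smul] at h
    haveI : Subsingleton M := by
      refine subsingleton_of_forall_eq 0 fun x => ?_
      have hx : x ∈ (⊤ : Submodule R M) := Submodule.mem_top
      rw [h] at hx
      simpa using hx
    infer_instance
  | cons I l ih =>
    intro hl M _ _ _ h
    have hI : I.IsMaximal := hl I (List.mem_cons_self (a := I) (l := l))
    set N : Submodule R M := l.prod • ⊤ with hN
    have hIN : I • N = ⊥ := by
      rw [hN, ← Submodule.smul_assoc, Ideal.smul_eq_mul, ← List.prod_cons, h]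
    have tors : Module.IsTorsionBySet R N (I : Set R) := by
      rintro ⟨x, hx⟩ ⟨r, hr⟩
      have : r • x ∈ I • N := Submodule.smul_mem_smul hr hx
      rw [hIN] at this
      exact Subtype.ext (by simpa using this)
    letI : Module (R ⧸ I) N := tors.module
    haveI : IsScalarTower R (R ⧸ I) N := tors.isScalarTower
    letI : Field (R ⧸ I) := Ideal.Quotient.field I
    haveI : IsNoetherian (R ⧸ I) N := isNoetherian_of_tower R inferInstance
    haveI : Module.Finite (R ⧸ I) N := ⟨IsNoetherian.noetherian ⊤⟩
    haveI : IsArtinian (R ⧸ I) N := isArtinian_of_fg_of_artinian'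
    have artN : IsArtinian R N := isArtinian_of_quot_tower I inferInstance
    have artQ : IsArtinian R (M ⧸ N) := by
      refine ih (fun J hJ => hl J (List.mem_cons_of_mem I hJ)) (M ⧸ N) ?_
      have : (⊤ : Submodule R (M ⧸ N)) = Submodule.map N.mkQ ⊤ := by
        rw [Submodule.map_top, Submodule.range_mkQ]
      rw [this, ← Submodule.map_smul'', hN]
      rw [eq_bot_iff]
      rintro y ⟨x, hx, rfl⟩
      simpa using (Submodule.Quotient.mk_eq_zero N).mpr hx
    exact (isArtinian_iff_submodule_quotient N).mpr ⟨artN, artQ⟩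

theorem iInf_le_prod_of_pairwise_coprime {ι : Type w} [DecidableEq ι] (t : Finset ι)
    (f : ι → Ideal R) (h : (↑t : Set ι).Pairwise fun i j => IsCoprime (f i) (f j)) :
    (⨅ i ∈ t, f i) ≤ ∏ i ∈ t, f i := by
  induction t using Finset.induction_on with
  | empty => simp
  | @insert a t ha ih =>
    rw [Finset.prod_insert ha]
    have hcop : IsCoprime (f a) (∏ i ∈ t, f i) := by
      apply IsCoprime.prod_right
      intro i hi
      exact h (Finset.mem_insert_self a t) (Finset.mem_insert_of_mem hi)
        (fun e => ha (e ▸ hi))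
    rw [← Ideal.inf_eq_mul_of_isCoprime hcop]
    have : (⨅ i ∈ insert a t, f i) = f a ⊓ ⨅ i ∈ t, f i := by
      rw [Finset.iInf_insert]
    rw [this]
    exact inf_le_inf_left _ (ih (h.mono (by simp [Finset.coe_insert, Set.subset_insert])))

theorem isMaximal_of_forall_rep [IsNoetherianRing R]
    (h : ∀ (M : Type u) [AddCommGroup M] [Module R M], Nontrivial M → IsRepresentable R M)
    (p : Ideal R) (hp : p.IsPrime) : p.IsMaximal := by
  haveI : Nontrivial (R ⧸ p) := Ideal.Quotient.nontrivial_iff.mpr hp.ne_top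
  obtain ⟨k, S, hsec, hsup⟩ := h (R ⧸ p) inferInstance
  have hk : k ≠ 0 := by
    rintro rfl
    obtain ⟨x, hx⟩ := exists_ne (0 : R ⧸ p)
    have hmem : x ∈ (⨆ i : Fin 0, S i) := hsup.symm ▸ Submodule.mem_top
    rw [iSup_of_empty] at hmem
    exact hx ((Submodule.mem_bot _).mp hmem)
  set i0 : Fin k := ⟨0, Nat.pos_of_ne_zero hk⟩
  obtain ⟨hne, hsecond⟩ := hsec i0
  obtain ⟨s₀, hs₀T, hs₀⟩ := Submodule.ne_bot_iff _ |>.mp hne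
  obtain ⟨y, rfl⟩ := Ideal.Quotient.mk_surjective s₀
  have hy : y ∉ p := fun hy => hs₀ (Ideal.Quotient.eq_zero_iff_mem.mpr hy)
  rw [Ideal.isMaximal_iff]
  constructor
  · exact fun h1 => hp.ne_top ((Ideal.eq_top_iff_one p).mpr h1)
  · intro J x hpJ hxp hxJ
    rcases hsecond x with hsurj | ⟨n, hnil⟩
    · have hfg : (S i0).FG := IsNoetherian.noetherian (S i0)
      have hle : S i0 ≤ (Ideal.span {x}) • S i0 := by
        intro s hs
        obtain ⟨t, ht, rfl⟩ := hsurj s hs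
        exact Submodule.smul_mem_smul (Ideal.mem_span_singleton_self x) ht
      obtain ⟨r, hr1, hr0⟩ :=
        Submodule.exists_sub_one_mem_and_smul_eq_zero_of_fg_of_le_smul _ (S i0) hfg hle
      have hrp : r ∈ p := by
        have h0 := hr0 _ hs₀T
        rw [Algebra.smul_def, Ideal.Quotient.algebraMap_eq, ← map_mul] at h0
        rcases hp.mem_or_mem (Ideal.Quotient.eq_zero_iff_mem.mp h0) with hm | hm
        · exact hm
        · exact absurd hm hy
      have hrJ : r ∈ J := hpJ hrp
      have hr1J : r - 1 ∈ J := (Ideal.span_singleton_le_iff_mem J).mpr hxJ hr1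
      have : (1 : R) = r - (r - 1) := by ring
      rw [this]
      exact J.sub_mem hrJ hr1J
    · exfalso
      have h0 := hnil _ hs₀T
      have : Ideal.Quotient.mk p (x ^ n * y) = 0 := by
        rw [map_mul, ← h0, Algebra.smul_def, Ideal.Quotient.algebraMap_eq]
      have hmem : x ^ n * y ∈ p := Ideal.Quotient.eq_zero_iff_mem.mp this
      rcases hp.mem_or_mem hmem with hmem | hmem
      · exact hxp (hp.mem_of_pow_mem n hmem)
      · exact hy hmem

end Aux

theorem artinian_iff_forall_nontrivial_isRepresentable (R : Type u) [CommRing R]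
    [IsNoetherianRing R] :
    IsArtinianRing R ↔
      ∀ (M : Type u) [AddCommGroup M] [Module R M], Nontrivial M → IsRepresentable R M := by
  constructor
  · intro hart M _ _ hM
    classical
    haveI := hart
    haveI : Nontrivial R := by
      rcases subsingleton_or_nontrivial R with hs | hnt
      · exact absurd (Module.subsingleton R M) (not_subsingleton_iff_nontrivial.mpr hM)
      · exact hnt
    obtain ⟨n, hn⟩ := IsNoetherianRing.isNilpotent_nilradical R
    set N := n + 1 with hNdef
    have hNbot : nilradical R ^ N = ⊥ := by
      rw [hNdef, pow_succ, hn, zero_mul]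
      rfl
    have hfin : {I : Ideal R | I.IsPrime}.Finite := IsArtinianRing.setOfPred_isPrime_finite R
    set s := hfin.toFinset with hsdef
    have hsprime : ∀ q ∈ s, q.IsPrime := fun q hq => hfin.mem_toFinset.mp hq
    have hsmax : ∀ q ∈ s, q.IsMaximal := fun q hq =>
      letI := hsprime q hq
      IsArtinianRing.isMaximal_of_isPrime q
    have hcoppow : ∀ i ∈ (↑s : Set (Ideal R)), ∀ j ∈ (↑s : Set (Ideal R)), i ≠ j →
        IsCoprime (i ^ N) (j ^ N) := by
      intro i hi j hj hij
      exact (Ideal.isCoprime_iff_sup_eq.mpr (Ideal.IsMaximal.coprime_of_ne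
        (hsmax i (Finset.mem_coe.mp hi)) (hsmax j (Finset.mem_coe.mp hj)) hij)).pow
    have hcop : (↑s : Set (Ideal R)).Pairwise fun i j => i ^ N ⊔ j ^ N = ⊤ := by
      intro i hi j hj hij
      exact Ideal.isCoprime_iff_sup_eq.mp (hcoppow i hi j hj hij)
    have hprodle : (∏ q ∈ s, q) ≤ nilradical R := by
      rw [nilradical_eq_sInf]
      apply le_sInf
      intro p hp
      exact le_trans Ideal.prod_le_inf (Finset.inf_le (hfin.mem_toFinset.mpr hp))
    have hinf : (⨅ q ∈ s, q ^ N) = ⊥ := by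
      apply le_bot_iff.mp
      calc (⨅ q ∈ s, q ^ N) ≤ ∏ q ∈ s, q ^ N :=
            iInf_le_prod_of_pairwise_coprime s _ hcoppow
        _ = (∏ q ∈ s, q) ^ N := by rw [Finset.prod_pow]
        _ ≤ (nilradical R) ^ N := Ideal.pow_right_mono hprodle N
        _ = ⊥ := hNbot
    set T : Ideal R → Submodule R M :=
      fun q => Submodule.torsionBySet R M ((q ^ N : Ideal R) : Set R) with hT
    have hdec : (⨆ q ∈ s, T q) = ⊤ := by
      rw [hT]
      rw [Submodule.iSup_torsionBySet_ideal_eq_torsionBySet_iInf hcop, hinf]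
      rw [eq_top_iff]
      intro x _
      rw [Submodule.mem_torsionBySet_iff]
      rintro ⟨a, ha⟩
      have ha0 : a = 0 := by simpa using ha
      simp [ha0]
    set s' := s.filter (fun q => T q ≠ ⊥) with hs'
    have hdec' : (⨆ q ∈ s', T q) = ⊤ := by
      rw [eq_top_iff, ← hdec]
      apply iSup₂_le
      intro q hq
      by_cases h0 : T q = ⊥
      · rw [h0]; exact bot_le
      · exact le_iSup₂ (f := fun q (_ : q ∈ s') => T q) q (Finset.mem_filter.mpr ⟨hq, h0⟩)
    refine ⟨s'.card, fun i => T (s'.equivFin.symm i), fun i => ?_, ?_⟩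
    · set q : Ideal R := (s'.equivFin.symm i : Ideal R) with hq_def
      have hq' : q ∈ s' := (s'.equivFin.symm i).2
      have hqmax : q.IsMaximal := hsmax q (Finset.mem_of_mem_filter _ hq')
      have hqne : T q ≠ ⊥ := (Finset.mem_filter.mp hq').2
      refine ⟨hqne, fun x => ?_⟩
      by_cases hxq : x ∈ q
      · right
        refine ⟨N, fun m hm => ?_⟩
        exact (Submodule.mem_torsionBySet_iff _ _).mp hm ⟨x ^ N, Ideal.pow_mem_pow hxq N⟩
      · left
        have hlt : q < q ⊔ Ideal.span {x} := by
          refine lt_of_le_of_ne le_sup_left (fun e => hxq ?_)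
          rw [e]
          exact Submodule.mem_sup_right (Ideal.mem_span_singleton_self x)
        have htop : q ⊔ Ideal.span {x} = ⊤ := hqmax.out.2 _ hlt
        have htop' : Ideal.span {x} ⊔ q ^ N = ⊤ :=
          Ideal.sup_pow_eq_top (by rwa [sup_comm] at htop)
        obtain ⟨a, ha, b, hb, hab⟩ := Submodule.mem_sup.mp ((Ideal.eq_top_iff_one _).mp htop')
        obtain ⟨c, rfl⟩ := Ideal.mem_span_singleton'.mp ha
        intro m hm
        refine ⟨c • m, Submodule.smul_mem _ c hm, ?_⟩
        have hbm : b • m = 0 := (Submodule.mem_torsionBySet_iff _ _).mp hm ⟨b, hb⟩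
        calc x • c • m = (c * x) • m := by rw [smul_smul, mul_comm]
          _ = (c * x) • m + b • m := by rw [hbm, add_zero]
          _ = ((c * x) + b) • m := (add_smul _ _ _).symm
          _ = (1 : R) • m := by rw [hab]
          _ = m := one_smul _ _
    · rw [← hdec', iSup_subtype']
      exact Equiv.iSup_comp (g := fun q : {q // q ∈ s'} => T q.1) s'.equivFin.symm
  · intro h
    rcases subsingleton_or_nontrivial R with hs | hnt
    · exact Ring.isArtinian_of_zero_eq_one (Subsingleton.elim 0 1)
    · have hmax : ∀ p : Ideal R, p.IsPrime → p.IsMaximal := isMaximal_of_forall_rep h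
      obtain ⟨n, hn⟩ := IsNoetherianRing.isNilpotent_nilradical R
      have hfin : (minimalPrimes R).Finite := minimalPrimes.finite_of_isNoetherianRing R
      set s := hfin.toFinset with hs_def
      have hsprime : ∀ q ∈ s, q.IsPrime := fun q hq => (hfin.mem_toFinset.mp hq).1.1
      have hprodle : (∏ q ∈ s, q) ≤ nilradical R := by
        have h1 : (∏ q ∈ s, q) ≤ sInf (minimalPrimes R) := by
          apply le_sInf
          intro p hp
          exact le_trans Ideal.prod_le_inf (Finset.inf_le (hfin.mem_toFinset.mpr hp))
        rwa [minimalPrimes, Ideal.sInf_minimalPrimes] at h1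
      set l : List (Ideal R) := (List.replicate n s.toList).flatten with hl_def
      have hlmax : ∀ I ∈ l, I.IsMaximal := by
        intro I hI
        rw [hl_def, List.mem_flatten] at hI
        obtain ⟨c, hc, hIc⟩ := hI
        rw [List.eq_of_mem_replicate hc] at hIc
        exact hmax I (hsprime I (Finset.mem_toList.mp hIc))
      have hlprod : l.prod ≤ ⊥ := by
        rw [hl_def, List.prod_flatten, List.map_replicate, List.prod_replicate]
        have hst : s.toList.prod = ∏ q ∈ s, q := by
          simpa using Finset.prod_map_toList s id
        rw [hst]
        calc (∏ q ∈ s, q) ^ n ≤ (nilradical R) ^ n := Ideal.pow_right_mono hprodle n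
          _ = ⊥ := hn
      refine isArtinian_of_prod_maximal l hlmax R ?_
      rw [Ideal.smul_eq_mul, Ideal.mul_top]
      exact le_bot_iff.mp hlprod
end

section
/- Let R be a commutative Noetherian ring. Then R is Artinian if and only if every nonzero Noetherian R-module is representable. -/
open Function

universe u v w

section Aux

variable {R : Type u} [CommRing R] {M : Type v} [AddCommGroup M] [Module R M]

/-- Internal representability of a submodule. -/
def RepSub (N : Submodule R M) : Prop :=
  ∃ (k : ℕ) (S : Fin k → Submodule R M),
    (∀ i, IsSecondarySubmodule (S i)) ∧ (⨆ i, S i) = N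

lemma RepSub.sup {A B : Submodule R M} (hA : RepSub A) (hB : RepSub B) :
    RepSub (A ⊔ B) := by
  obtain ⟨k, S, hS, rfl⟩ := hA
  obtain ⟨l, T, hT, rfl⟩ := hB
  refine ⟨k + l, Sum.elim S T ∘ finSumFinEquiv.symm, fun i => ?_, ?_⟩
  · rcases h : finSumFinEquiv.symm i with a | b <;> simp [comp_apply, h, hS, hT]
  · rw [comp_def, Equiv.iSup_comp (e := finSumFinEquiv.symm) (g := Sum.elim S T), iSup_sum]
    simp

lemma lsmul_pow_apply (x : R) (n : ℕ) (m : M) :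
    ((LinearMap.lsmul R M x) ^ n) m = x ^ n • m := by
  induction n with
  | zero => simp
  | succ n ih =>
    rw [pow_succ', pow_succ', Module.End.mul_apply, LinearMap.lsmul_apply, ih, smul_smul]

lemma repSub_of_ne_bot [IsArtinian R M] : ∀ N : Submodule R M, N ≠ ⊥ → RepSub N := by
  intro N
  induction N using WellFoundedLT.induction with
  | _ N IH =>
  intro hN
  by_cases hsec : IsSecondarySubmodule N
  · exact ⟨1, fun _ => N, fun _ => hsec, by simp⟩
  have hx : ∃ x : R, (∃ s ∈ N, ∀ t ∈ N, x • t ≠ s) ∧ ∀ n : ℕ, ∃ s ∈ N, x ^ n • s ≠ 0 := by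
    rw [IsSecondarySubmodule] at hsec
    push_neg at hsec
    exact hsec hN
  obtain ⟨x, hx1, hx2⟩ := hx
  set f : M →ₗ[R] M := LinearMap.lsmul R M x with hf
  have hanti : Antitone fun n => Submodule.map (f ^ n) N := by
    apply antitone_nat_of_succ_le
    rintro n y ⟨s, hs, rfl⟩
    refine ⟨x • s, N.smul_mem x hs, ?_⟩
    rw [lsmul_pow_apply, lsmul_pow_apply, smul_smul, ← pow_succ]
  obtain ⟨n, hn⟩ := IsArtinian.monotone_stabilizes
    (⟨fun n => OrderDual.toDual (Submodule.map (f ^ n) N), fun a b h => hanti h⟩ :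
      ℕ →o (Submodule R M)ᵒᵈ)
  set e := n + 1 with he'
  have he : Submodule.map (f ^ e) N = Submodule.map (f ^ (e + e)) N := by
    have h1 := hn e (by omega)
    have h2 := hn (e + e) (by omega)
    exact (h1.symm.trans h2 : _)
  set A := Submodule.map (f ^ e) N with hA
  set B := N ⊓ LinearMap.ker (f ^ e) with hB
  have hAleN : A ≤ N := by
    rintro y ⟨s, hs, rfl⟩
    have : x ^ e • s ∈ N := N.smul_mem _ hs
    rwa [← lsmul_pow_apply x e s] at this
  have hNsub : N ≤ A ⊔ B := by
    intro s hs
    have h1 : (f ^ e) s ∈ Submodule.map (f ^ (e + e)) N :=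
      he ▸ Submodule.mem_map_of_mem hs
    obtain ⟨t, ht, hte⟩ := h1
    have hftA : (f ^ e) t ∈ A := Submodule.mem_map_of_mem ht
    refine Submodule.mem_sup.mpr ⟨(f ^ e) t, hftA, s - (f ^ e) t, ⟨?_, ?_⟩, by abel⟩
    · exact N.sub_mem hs (hAleN hftA)
    · rw [SetLike.mem_coe, LinearMap.mem_ker, map_sub]
      have : (f ^ e) ((f ^ e) t) = (f ^ (e + e)) t := by
        rw [← Module.End.mul_apply, ← pow_add]
      rw [this, hte, sub_self]
  have hNA : N = A ⊔ B := le_antisymm hNsub (sup_le hAleN inf_le_left)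
  have hAne : A ≠ N := by
    intro hAN
    obtain ⟨s, hsN, hsne⟩ := hx1
    rw [← hAN] at hsN
    obtain ⟨t, htN, hft⟩ := hsN
    refine hsne (x ^ n • t) (N.smul_mem _ htN) ?_
    rw [← hft, lsmul_pow_apply, smul_smul, ← pow_succ']
  have hBne : B ≠ N := by
    intro hBN
    obtain ⟨s, hsN, hsne⟩ := hx2 e
    apply hsne
    rw [← hBN] at hsN
    have := hsN.2
    rwa [SetLike.mem_coe, LinearMap.mem_ker, lsmul_pow_apply] at this
  have hA0 : A ≠ ⊥ := by
    intro hA0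
    obtain ⟨s, hsN, hsne⟩ := hx2 e
    apply hsne
    have : (f ^ e) s ∈ A := Submodule.mem_map_of_mem hsN
    rw [hA0, Submodule.mem_bot] at this
    rwa [lsmul_pow_apply] at this
  have hB0 : B ≠ ⊥ := by
    intro hB0
    exact hAne ((hNA.trans (by rw [hB0, sup_bot_eq])).symm)
  have hrep := (IH A (lt_of_le_of_ne hAleN hAne) hA0).sup
    (IH B (lt_of_le_of_ne inf_le_left hBne) hB0)
  rw [hNA]
  exact hrep

end Aux

section Akizuki

variable {R : Type u} [CommRing R]

lemma isArtinian_of_isTorsionBy_maximal {K : Type v} [AddCommGroup K]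
    [Module R K] [IsNoetherian R K] (m : Ideal R) (hm : m.IsMaximal)
    (htor : ∀ x ∈ m, ∀ a : K, x • a = 0) : IsArtinian R K := by
  have htors : Module.IsTorsionBySet R K (m : Set R) := fun a x => htor x x.2 a
  letI : Module (R ⧸ m) K := htors.module
  haveI : IsScalarTower R (R ⧸ m) K := htors.isScalarTower
  haveI := hm
  letI : Field (R ⧸ m) := Ideal.Quotient.field m
  haveI : IsNoetherian (R ⧸ m) K := isNoetherian_of_tower R inferInstance
  haveI : Module.Finite (R ⧸ m) K := ⟨IsNoetherian.noetherian ⊤⟩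
  haveI hart : IsArtinian (R ⧸ m) K := isArtinian_of_fg_of_artinian' (R := R ⧸ m)
  have hsmul : ∀ (r : R) (a : K), (Ideal.Quotient.mk m r) • a = r • a :=
    fun r a => htors.mk_smul r a
  let F : Submodule R K → Submodule (R ⧸ m) K := fun p =>
    { carrier := p
      add_mem' := fun h1 h2 => p.add_mem h1 h2
      zero_mem' := p.zero_mem
      smul_mem' := by
        intro q a ha
        obtain ⟨r, rfl⟩ := Ideal.Quotient.mk_surjective q
        rw [hsmul]
        exact p.smul_mem r ha }
  have hF : StrictMono F := by
    intro p q h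
    rw [lt_iff_le_not_ge] at h ⊢
    exact ⟨fun x hx => h.1 hx, fun hle => h.2 fun x hx => hle hx⟩
  exact hF.wellFoundedLT

lemma isArtinian_of_list_prod_maximal_smul :
    ∀ (L : List (Ideal R)) (M : Type v) [AddCommGroup M] [Module R M] [IsNoetherian R M],
      (∀ I ∈ L, I.IsMaximal) → L.prod • (⊤ : Submodule R M) = ⊥ → IsArtinian R M := by
  intro L
  induction L with
  | nil =>
    intro M _ _ _ _ hprod
    rw [List.prod_nil, Ideal.one_eq_top, Submodule.top_smul] at hprod
    haveI : Subsingleton M := by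
      refine subsingleton_of_forall_eq 0 fun a => ?_
      have : a ∈ (⊥ : Submodule R M) := hprod ▸ Submodule.mem_top
      simpa using this
    haveI : Finite M := Finite.of_subsingleton
    exact isArtinian_of_finite
  | cons m L' IH =>
    intro M _ _ _ hmax hprod
    rw [List.prod_cons, mul_smul] at hprod
    set N : Submodule R M := L'.prod • ⊤ with hNdef
    have hmN : m • N = ⊥ := hprod
    have hartN : IsArtinian R N := by
      refine isArtinian_of_isTorsionBy_maximal m (hmax m List.mem_cons_self) ?_
      intro x hx a
      have : x • (a : M) ∈ m • N := Submodule.smul_mem_smul hx a.2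
      rw [hmN, Submodule.mem_bot] at this
      exact Subtype.ext (by simpa using this)
    have hartQ : IsArtinian R (M ⧸ N) := by
      refine IH (M ⧸ N) (fun I hI => hmax I (List.mem_cons_of_mem m hI)) ?_
      have htop : (⊤ : Submodule R (M ⧸ N)) = Submodule.map N.mkQ ⊤ := by
        rw [Submodule.map_top, Submodule.range_mkQ]
      rw [htop, ← Submodule.map_smul'', ← hNdef]
      rw [eq_bot_iff]
      rintro y ⟨a, ha, rfl⟩
      simp only [Submodule.mem_bot, Submodule.mkQ_apply]
      rwa [Submodule.Quotient.mk_eq_zero]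
    exact (isArtinian_iff_submodule_quotient N).mpr ⟨hartN, hartQ⟩

lemma isArtinianRing_of_primes_maximal [IsNoetherianRing R]
    (hmax : ∀ p : Ideal R, p.IsPrime → p.IsMaximal) : IsArtinianRing R := by
  obtain ⟨n, hn⟩ := IsNoetherianRing.isNilpotent_nilradical R
  have hfin : (minimalPrimes R).Finite := minimalPrimes.finite_of_isNoetherianRing R
  set L₀ : List (Ideal R) := hfin.toFinset.val.toList with hL₀
  set L : List (Ideal R) := (List.replicate n L₀).flatten with hL
  have hLmem : ∀ I ∈ L, I ∈ minimalPrimes R := by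
    intro I hI
    rw [hL, List.mem_flatten] at hI
    obtain ⟨l, hl, hIl⟩ := hI
    rw [List.mem_replicate] at hl
    rw [hl.2, hL₀, Multiset.mem_toList, ← Finset.mem_def, Set.Finite.mem_toFinset] at hIl
    exact hIl
  have hLmax : ∀ I ∈ L, I.IsMaximal := fun I hI =>
    hmax I (hLmem I hI).1.1
  have hLprod : L.prod = ⊥ := by
    have h0 : L₀.prod ≤ nilradical R := by
      have h1 : L₀.prod = hfin.toFinset.val.prod := Multiset.prod_toList _
      have h2 : hfin.toFinset.val.prod ≤ sInf (minimalPrimes R) := by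
        apply le_sInf
        intro q hq
        have hqT : q ∈ hfin.toFinset.val := by
          rw [← Finset.mem_def, Set.Finite.mem_toFinset]; exact hq
        exact le_trans Ideal.multiset_prod_le_inf (Multiset.inf_le hqT)
      rw [h1]
      refine h2.trans (le_of_eq ?_)
      rw [nilradical, Ideal.zero_eq_bot, ← Ideal.sInf_minimalPrimes (I := (⊥ : Ideal R))]
    have hprodL : L.prod = L₀.prod ^ n := by
      rw [hL, List.prod_flatten, List.map_replicate, List.prod_replicate]
    rw [hprodL, eq_bot_iff]
    calc L₀.prod ^ n ≤ (nilradical R) ^ n := Ideal.pow_right_mono h0 n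
      _ = ⊥ := hn
  have : IsArtinian R R := by
    refine isArtinian_of_list_prod_maximal_smul L R hLmax ?_
    rw [smul_eq_mul, Ideal.mul_top, hLprod]
  exact this

end Akizuki

theorem artinian_iff_forall_noetherian_nontrivial_isRepresentable (R : Type u) [CommRing R]
    [IsNoetherianRing R] :
    IsArtinianRing R ↔
      ∀ (M : Type u) [AddCommGroup M] [Module R M], IsNoetherian R M → Nontrivial M →
        IsRepresentable R M := by
  constructor
  · intro hart M _ _ hNoe hnt
    haveI := hart
    haveI := hNoe
    haveI := hnt
    haveI : Module.Finite R M := ⟨IsNoetherian.noetherian ⊤⟩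
    haveI : IsArtinian R M := isArtinian_of_fg_of_artinian'
    have htb : (⊤ : Submodule R M) ≠ ⊥ := by
      intro h
      obtain ⟨a, b, hab⟩ := exists_pair_ne M
      have ha : a ∈ (⊥ : Submodule R M) := h ▸ Submodule.mem_top
      have hb : b ∈ (⊥ : Submodule R M) := h ▸ Submodule.mem_top
      rw [Submodule.mem_bot] at ha hb
      exact hab (ha.trans hb.symm)
    exact repSub_of_ne_bot ⊤ htb
  · intro h
    apply isArtinianRing_of_primes_maximal
    intro p hp
    haveI := hp
    haveI : Nontrivial (R ⧸ p) := Ideal.Quotient.nontrivial_iff.mpr hp.ne_top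
    obtain ⟨k, S, hS, hsup⟩ := h (R ⧸ p) inferInstance inferInstance
    apply Ideal.Quotient.maximal_of_isField
    refine ⟨exists_pair_ne _, mul_comm, ?_⟩
    intro a ha
    obtain ⟨x, rfl⟩ := Ideal.Quotient.mk_surjective a
    have hxp : x ∉ p := fun hx => ha (Ideal.Quotient.eq_zero_iff_mem.mpr hx)
    have hmk_smul : ∀ (r : R) (b : R), r • Ideal.Quotient.mk p b = Ideal.Quotient.mk p (r * b) := by
      intro r b
      rw [← Ideal.Quotient.mk_eq_mk, ← Ideal.Quotient.mk_eq_mk, ← Submodule.Quotient.mk_smul,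
        smul_eq_mul]
    have hsurj : ∀ i, ∀ s ∈ S i, ∃ t ∈ S i, x • t = s := by
      intro i
      rcases (hS i).2 x with h1 | ⟨n, hnil⟩
      · exact h1
      exfalso
      obtain ⟨s, hsS, hs0⟩ := Submodule.exists_mem_ne_zero_of_ne_bot (hS i).1
      obtain ⟨r, rfl⟩ := Ideal.Quotient.mk_surjective s
      have hzero := hnil _ hsS
      rw [hmk_smul, Ideal.Quotient.eq_zero_iff_mem] at hzero
      rcases hp.mem_or_mem hzero with hxn | hr
      · exact hxp (hp.mem_of_pow_mem n hxn)
      · exact hs0 (Ideal.Quotient.eq_zero_iff_mem.mpr hr)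
    have htop : (⨆ i, S i) ≤ Submodule.map (LinearMap.lsmul R (R ⧸ p) x) ⊤ := by
      refine iSup_le fun i s hs => ?_
      obtain ⟨t, _, hts⟩ := hsurj i s hs
      exact ⟨t, Submodule.mem_top, hts⟩
    rw [hsup] at htop
    obtain ⟨t, -, hts⟩ := htop (Submodule.mem_top : (1 : R ⧸ p) ∈ ⊤)
    obtain ⟨z, rfl⟩ := Ideal.Quotient.mk_surjective t
    refine ⟨Ideal.Quotient.mk p z, ?_⟩
    have h1 : Ideal.Quotient.mk p x * Ideal.Quotient.mk p z =
        x • Ideal.Quotient.mk p z := by rw [hmk_smul, map_mul]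
    rw [h1]
    exact hts
end

section
/- Let R be a commutative Noetherian ring. Then R is Artinian if and only if every Noetherian R-module is semi co-Hopfian. -/
open Function

universe u v w

def SemiCoHopfian (R : Type u) (M : Type v) [CommRing R] [AddCommGroup M]
    [Module R M] : Prop :=
  ∀ x : R, Function.Injective (fun m : M => x • m) → Function.Bijective (fun m : M => x • m)

lemma artinian_of_primes_maximal (R : Type u) [CommRing R] [IsNoetherianRing R]
    (h : ∀ p : Ideal R, p.IsPrime → p.IsMaximal) : IsArtinianRing R := by
  have key : ∀ I : Ideal R, IsArtinian R (R ⧸ I) := by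
    intro I
    have wf : WellFounded ((· > ·) : Ideal R → Ideal R → Prop) :=
      isNoetherian_iff.mp (inferInstance : IsNoetherian R R)
    refine wf.induction (C := fun I : Ideal R => IsArtinian R (R ⧸ I)) I ?_
    intro I IH
    by_cases hs : Subsingleton (R ⧸ I)
    · exact inferInstance
    have : Nontrivial (R ⧸ I) := not_subsingleton_iff_nontrivial.mp hs
    obtain ⟨x, hx⟩ := exists_ne (0 : R ⧸ I)
    obtain ⟨p, hp, -⟩ := exists_le_isAssociatedPrime_of_isNoetherianRing R x hx
    obtain ⟨y, hy⟩ := (isAssociatedPrime_iff.mp hp).2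
    have hy0 : y ≠ 0 := by
      rintro rfl
      exact hp.1.ne_top (by
        rw [hy, eq_top_iff]; intro r _; rw [Submodule.mem_colon_singleton, smul_zero]
        exact Submodule.zero_mem _)
    set N : Submodule R (R ⧸ I) := R ∙ y with hN
    have hmax := h p hp.1
    have hker : LinearMap.ker (LinearMap.toSpanSingleton R (R ⧸ I) y) = p := by
      ext r
      rw [LinearMap.mem_ker, hy, Submodule.mem_colon_singleton, Submodule.mem_bot]
      rfl
    haveI : IsSimpleModule R (R ⧸ p) :=
      isSimpleModule_iff_isCoatom.mpr (Ideal.isMaximal_def.mp hmax)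
    have e1 : (R ⧸ p) ≃ₗ[R] N := by
      rw [← hker]
      exact (LinearMap.quotKerEquivRange _).trans
        (LinearEquiv.ofEq _ _ (LinearMap.span_singleton_eq_range R _ y).symm)
    haveI hA1 : IsArtinian R N := isArtinian_of_linearEquiv e1
    set J : Ideal R := N.comap (Submodule.mkQ (I : Submodule R R)) with hJ
    have hle : I ≤ J := by
      intro r hr
      simp only [hJ, Submodule.mem_comap, Submodule.mkQ_apply]
      rw [(Submodule.Quotient.mk_eq_zero I).mpr hr]
      exact N.zero_mem
    have hJI : I < J := by
      obtain ⟨r, hr⟩ := Submodule.mkQ_surjective (I : Submodule R R) y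
      refine lt_of_le_of_ne hle fun hEq => ?_
      have hrJ : r ∈ J := by
        simp only [hJ, Submodule.mem_comap, hr]
        exact Submodule.mem_span_singleton_self y
      rw [← hEq] at hrJ
      exact hy0 (by rw [← hr, Submodule.mkQ_apply, (Submodule.Quotient.mk_eq_zero I).mpr hrJ])
    have hmap : Submodule.map (Submodule.mkQ (I : Submodule R R)) (J : Submodule R R) = N :=
      Submodule.map_comap_eq_of_surjective (Submodule.mkQ_surjective _) N
    haveI hA2 : IsArtinian R ((R ⧸ I) ⧸ N) := by
      have hart : IsArtinian R (R ⧸ J) := IH J hJI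
      have e2 : ((R ⧸ I) ⧸ N) ≃ₗ[R] R ⧸ J := by
        rw [← hmap]
        exact Submodule.quotientQuotientEquivQuotient (I : Submodule R R) (J : Submodule R R) hle
      exact @isArtinian_of_linearEquiv _ _ _ _ _ _ _ _ e2.symm hart
    exact (isArtinian_iff_submodule_quotient N).mpr ⟨hA1, hA2⟩
  exact isArtinian_of_linearEquiv (Submodule.quotEquivOfEqBot (⊥ : Ideal R) rfl)

theorem artinian_iff_forall_noetherian_semiCoHopfian (R : Type u) [CommRing R]
    [IsNoetherianRing R] :
    IsArtinianRing R ↔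
      ∀ (M : Type u) [AddCommGroup M] [Module R M], IsNoetherian R M →
        SemiCoHopfian R M := by
  constructor
  · intro hArt M _ _ hNoeth x hinj
    haveI := hNoeth
    haveI : Module.Finite R M := ⟨IsNoetherian.noetherian ⊤⟩
    haveI : IsArtinian R M := isArtinian_of_fg_of_artinian'
    exact IsArtinian.bijective_of_injective_endomorphism (LinearMap.lsmul R M x) hinj
  · intro H
    refine artinian_of_primes_maximal R fun p hp => ?_
    haveI := hp
    haveI : Module.Finite R (R ⧸ p) := Module.Finite.of_surjective
      (Submodule.mkQ (p : Submodule R R)) (Submodule.mkQ_surjective _)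
    have hsch := H (R ⧸ p) (inferInstance) -- Noetherian since f.g. over Noetherian ring
    refine Ideal.Quotient.maximal_of_isField p ⟨exists_pair_ne _, mul_comm, ?_⟩
    intro a ha
    obtain ⟨x, rfl⟩ := Ideal.Quotient.mk_surjective a
    have hmul : ∀ m : R ⧸ p, x • m = (Ideal.Quotient.mk p x) * m := by
      intro m
      obtain ⟨a, rfl⟩ := Ideal.Quotient.mk_surjective m
      rfl
    have hinj : Function.Injective (fun m : R ⧸ p => x • m) := by
      intro m m' hmm
      have hx0 : (Ideal.Quotient.mk p x) ≠ 0 := ha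
      simp only [hmul] at hmm
      exact mul_left_cancel₀ hx0 hmm
    obtain ⟨m, hm⟩ := (hsch x hinj).2 1
    have hm' : x • m = 1 := hm
    rw [hmul] at hm'
    exact ⟨m, by rwa [mul_comm] at hm'⟩
end

section
/- Let R be a commutative Noetherian ring. Then R is Artinian if and only if every Noetherian R-module is co-Hopfian. -/
open Function

universe u v w

def CoHopfian (R : Type u) (M : Type v) [CommRing R] [AddCommGroup M]
    [Module R M] : Prop :=
  ∀ f : M →ₗ[R] M, Function.Injective f → Function.Bijective f

-- aux lemma 1: transfer Artinian along quotient ring action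
lemma aux_isArtinian_of_quot {R : Type u} [CommRing R] (I : Ideal R) (Q : Type v)
    [AddCommGroup Q] [Module R Q] [Module (R ⧸ I) Q]
    (hcomp : ∀ (r : R) (x : Q), Ideal.Quotient.mk I r • x = r • x)
    (h : IsArtinian (R ⧸ I) Q) : IsArtinian R Q := by
  let f : Submodule R Q → Submodule (R ⧸ I) Q := fun p =>
    { carrier := p
      add_mem' := fun ha hb => p.add_mem ha hb
      zero_mem' := p.zero_mem
      smul_mem' := by
        intro c x hx
        obtain ⟨r, rfl⟩ := Ideal.Quotient.mk_surjective c
        rw [hcomp]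
        exact p.smul_mem r hx }
  have hmono : ∀ p q, f p < f q ↔ p < q := by
    intro p q
    constructor <;> intro hpq <;>
      exact lt_of_le_of_ne (fun x hx => hpq.1 hx)
        (fun he => hpq.ne (SetLike.ext' (congrArg SetLike.coe he : _)))
  exact ⟨(⟨⟨f, fun p q hpq => by
    have : (f p : Set Q) = f q := congrArg SetLike.coe hpq
    exact SetLike.ext' this⟩, fun {p q} => hmono p q⟩ :
      ((· < ·) : Submodule R Q → _ → Prop) ↪r ((· < ·) : Submodule (R ⧸ I) Q → _ → Prop)).wellFounded h.wf⟩

lemma aux_list {R : Type u} [CommRing R] [IsNoetherianRing R] :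
    ∀ (L : List (Ideal R)), (∀ I ∈ L, I.IsMaximal) →
    ∀ (M : Type u) [AddCommGroup M] [Module R M], Module.Finite R M →
      L.prod • (⊤ : Submodule R M) = ⊥ → IsArtinian R M := by
  intro L
  induction L with
  | nil =>
    intro _ M _ _ _ h
    rw [List.prod_nil, Ideal.one_eq_top, Submodule.top_smul] at h
    have : Subsingleton M := by
      constructor
      intro a b
      have ha : a ∈ (⊥ : Submodule R M) := h ▸ Submodule.mem_top
      have hb : b ∈ (⊥ : Submodule R M) := h ▸ Submodule.mem_top
      simp only [Submodule.mem_bot] at ha hb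
      rw [ha, hb]
    infer_instance
  | cons I L ih =>
    intro hmax M _ _ hfin M0
    have hI : I.IsMaximal := hmax I List.mem_cons_self
    let N : Submodule R M := I • (⊤ : Submodule R M)
    have hNfg : Module.Finite R N := by
      rw [Module.Finite.iff_fg]
      exact IsNoetherian.noetherian N
    have hprod : L.prod • N = ⊥ := by
      rw [show N = I • (⊤ : Submodule R M) from rfl, ← mul_smul, mul_comm, ← List.prod_cons]
      exact M0
    have stepA : IsArtinian R N := by
      apply ih (fun J hJ => hmax J (List.mem_cons_of_mem _ hJ)) N hNfg
      apply Submodule.map_injective_of_injective N.injective_subtype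
      rw [Submodule.map_smul'', Submodule.map_top, Submodule.range_subtype,
        Submodule.map_bot]
      exact hprod
    have stepB : IsArtinian R (M ⧸ (I • ⊤ : Submodule R M)) := by
      haveI : IsScalarTower R (R ⧸ I) (M ⧸ (I • ⊤ : Submodule R M)) :=
        IsScalarTower.of_algebraMap_smul (R := R) (A := R ⧸ I)
          (M := M ⧸ (I • ⊤ : Submodule R M)) fun r x => by
          obtain ⟨m, rfl⟩ := Submodule.Quotient.mk_surjective (I • ⊤ : Submodule R M) x
          rw [Ideal.Quotient.algebraMap_eq]
          rfl
      haveI : Module.Finite (R ⧸ I) (M ⧸ (I • ⊤ : Submodule R M)) :=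
        Module.Finite.of_restrictScalars_finite R _ _
      haveI : IsArtinianRing (R ⧸ I) := by
        letI := Ideal.Quotient.field I
        exact DivisionRing.instIsArtinianRing
      haveI : IsArtinian (R ⧸ I) (M ⧸ (I • ⊤ : Submodule R M)) := inferInstance
      refine aux_isArtinian_of_quot I _ (fun r x => ?_) this
      obtain ⟨m, rfl⟩ := Submodule.Quotient.mk_surjective (I • ⊤ : Submodule R M) x
      rfl
    exact (isArtinian_iff_submodule_quotient (I • ⊤ : Submodule R M)).mpr ⟨stepA, stepB⟩

lemma aux_prod_le {R : Type u} [CommRing R] :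
    ∀ (L : List (Ideal R)) {J : Ideal R}, J ∈ L → L.prod ≤ J := by
  intro L
  induction L with
  | nil => intro J hJ; exact absurd hJ List.not_mem_nil
  | cons I L ih =>
    intro J hJ
    rw [List.prod_cons]
    rcases List.mem_cons.mp hJ with h | h
    · subst h; exact Ideal.mul_le_left
    · exact Ideal.mul_le_right.trans (ih h)

open Function

private theorem aux_main (R : Type u) [CommRing R] [IsNoetherianRing R]
    (H : ∀ (M : Type u) [AddCommGroup M] [Module R M], IsNoetherian R M →
        ∀ f : M →ₗ[R] M, Function.Injective f → Function.Bijective f) :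
    IsArtinianRing R := by
  -- every prime is maximal
  have hmax : ∀ (p : Ideal R), p.IsPrime → p.IsMaximal := by
    intro p hp
    haveI := hp
    apply Ideal.Quotient.maximal_of_isField
    refine ⟨⟨0, 1, zero_ne_one⟩, mul_comm, ?_⟩
    intro a ha
    let f : (R ⧸ p) →ₗ[R] (R ⧸ p) := LinearMap.mul R (R ⧸ p) a
    have hinj : Function.Injective f := by
      intro x y hxy
      exact mul_left_cancel₀ ha hxy
    obtain ⟨b, hb⟩ := (H (R ⧸ p) inferInstance f hinj).2 1
    exact ⟨b, hb⟩
  obtain ⟨n, hn⟩ := IsNoetherianRing.isNilpotent_nilradical R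
  have hfin := minimalPrimes.finite_of_isNoetherianRing R
  set L0 : List (Ideal R) := hfin.toFinset.toList with hL0
  have hmem : ∀ J ∈ L0, J ∈ minimalPrimes R := by
    intro J hJ
    rw [hL0, Finset.mem_toList, Set.Finite.mem_toFinset] at hJ
    exact hJ
  have hmem' : ∀ J ∈ minimalPrimes R, J ∈ L0 := by
    intro J hJ
    rw [hL0, Finset.mem_toList, Set.Finite.mem_toFinset]
    exact hJ
  have hprod0 : L0.prod ≤ nilradical R := by
    have hnil : nilradical R = sInf (minimalPrimes R) := by
      rw [show minimalPrimes R = (⊥ : Ideal R).minimalPrimes from rfl,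
        Ideal.sInf_minimalPrimes]
      rfl
    rw [hnil]
    exact le_sInf fun J hJ => aux_prod_le L0 (hmem' J hJ)
  -- the list of maximal ideals with product zero
  set L : List (Ideal R) := (List.replicate n L0).flatten with hL
  have hLmax : ∀ J ∈ L, J.IsMaximal := by
    intro J hJ
    rw [hL, List.mem_flatten] at hJ
    obtain ⟨l, hl, hJl⟩ := hJ
    rw [List.eq_of_mem_replicate hl] at hJl
    exact hmax J (hmem J hJl).1.1
  have hLprod : L.prod = ⊥ := by
    have : L.prod = L0.prod ^ n := by
      rw [hL, List.prod_flatten, List.map_replicate, List.prod_replicate]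
    rw [this]
    have h1 : L0.prod ^ n ≤ nilradical R ^ n := Ideal.pow_right_mono hprod0 n
    rw [hn] at h1
    exact le_bot_iff.mp h1
  have := aux_list L hLmax R inferInstance (by
    rw [hLprod]
    exact Submodule.bot_smul ⊤)
  exact this

theorem artinian_iff_forall_noetherian_coHopfian (R : Type u) [CommRing R]
    [IsNoetherianRing R] :
    IsArtinianRing R ↔
      ∀ (M : Type u) [AddCommGroup M] [Module R M], IsNoetherian R M →
        CoHopfian R M := by
  constructor
  · intro hArt M _ _ hNoeth f hf
    haveI := hNoeth
    haveI : Module.Finite R M := ⟨IsNoetherian.noetherian ⊤⟩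
    exact IsArtinian.bijective_of_injective_endomorphism f hf
  · intro H
    exact aux_main R (fun M _ _ h => H M h)
end

section
/- Over a commutative ring R, every good R-module is semi Hopfian. Explicitly: if M is a nonzero R-module whose zero submodule is a finite intersection of primary submodules, then for every x ∈ R, multiplication by x on M is an isomorphism whenever it is surjective. -/
open Function

universe u v w

/-!
If `x` acts surjectively on `M`, it acts surjectively on every quotient `M ⧸ Q`, and so do all
its powers; for `Q` primary and proper, `x` therefore cannot act nilpotently on `M ⧸ Q`, so it
acts injectively. Hence the kernel of `x` on `M` lies in every primary component of `0`, i.e. in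
their intersection `0`.
-/

namespace IsPrimarySubmodule

variable {R : Type u} [CommRing R] {M : Type v} [AddCommGroup M] [Module R M]
  {Q : Submodule R M}

theorem injective_smul_of_surjective (hQ : IsPrimarySubmodule Q) {x : R}
    (hx : Surjective (fun m : M => x • m)) : Injective (fun m : M ⧸ Q => x • m) := by
  refine hQ.2 x |>.resolve_right ?_
  rintro ⟨n, hn⟩
  refine hQ.1 (Submodule.eq_top_iff'.mpr fun y => ?_)
  obtain ⟨z, rfl⟩ : ∃ z, x ^ n • z = y := by
    simpa only [smul_iterate_apply] using hx.iterate n y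
  rw [← Submodule.Quotient.mk_eq_zero, Submodule.Quotient.mk_smul]
  exact hn _

theorem mem_of_smul_eq_zero (hQ : IsPrimarySubmodule Q) {x : R}
    (hx : Surjective (fun m : M => x • m)) {m : M} (hm : x • m = 0) : m ∈ Q := by
  rw [← Submodule.Quotient.mk_eq_zero]
  refine hQ.injective_smul_of_surjective hx ?_
  simp only [← Submodule.Quotient.mk_smul, hm, Submodule.Quotient.mk_zero, smul_zero]

end IsPrimarySubmodule

theorem isGood_semiHopfian_general {R : Type u} [CommRing R] {M : Type v} [AddCommGroup M]
    [Module R M] (h : IsGood R M) :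
    SemiHopfian R M := by
  obtain ⟨k, Q, hQ, hinf⟩ := h
  intro x hx
  refine ⟨fun a b hab => ?_, hx⟩
  have hsub : x • (a - b) = 0 := by rw [smul_sub, sub_eq_zero]; exact hab
  have hmem : a - b ∈ ⨅ i, Q i :=
    Submodule.mem_iInf _ |>.mpr fun i => (hQ i).mem_of_smul_eq_zero hx hsub
  rwa [hinf, Submodule.mem_bot, sub_eq_zero] at hmem

theorem isGood_semiHopfian {R : Type u} [CommRing R] {M : Type v} [AddCommGroup M]
    [Module R M] (hM : Nontrivial M) (h : IsGood R M) :
    SemiHopfian R M :=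
  isGood_semiHopfian_general h
end

section
/- Over a commutative ring R, every representable R-module is semi co-Hopfian. Explicitly: if M is a nonzero R-module that is a finite sum of secondary submodules, then for every x ∈ R, multiplication by x on M is an isomorphism whenever it is injective. -/
open Function

universe u v w

/-! A secondary submodule cannot be killed by a power of a regular element `x`, so `x` acts
surjectively on it; hence the image of multiplication by `x` contains every secondary summand of a
representable module, and therefore the whole module. -/

theorem IsSecondarySubmodule.le_range_lsmul {R : Type u} [CommRing R] {M : Type v}
    [AddCommGroup M] [Module R M] {S : Submodule R M} (hS : IsSecondarySubmodule S) {x : R}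
    (hx : IsSMulRegular M x) : S ≤ LinearMap.range (LinearMap.lsmul R M x) := by
  rcases hS.2 x with hsurj | ⟨n, hnil⟩
  · intro s hs
    obtain ⟨t, -, rfl⟩ := hsurj s hs
    exact ⟨t, rfl⟩
  · obtain ⟨s, hs, hs0⟩ := (Submodule.ne_bot_iff S).mp hS.1
    exact absurd ((hx.pow n).right_eq_zero_of_smul (hnil s hs)) hs0

theorem isRepresentable_semiCoHopfian_general {R : Type u} [CommRing R] {M : Type v} [AddCommGroup M]
    [Module R M] (h : IsRepresentable R M) :
    SemiCoHopfian R M := by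
  intro x hinj
  obtain ⟨k, S, hsec, hsup⟩ := h
  have hrange : LinearMap.range (LinearMap.lsmul R M x) = ⊤ :=
    top_unique (hsup ▸ iSup_le fun i => (hsec i).le_range_lsmul hinj)
  exact ⟨hinj, LinearMap.range_eq_top.mp hrange⟩

theorem isRepresentable_semiCoHopfian {R : Type u} [CommRing R] {M : Type v} [AddCommGroup M]
    [Module R M] (hM : Nontrivial M) (h : IsRepresentable R M) :
    SemiCoHopfian R M :=
  isRepresentable_semiCoHopfian_general h
end

section
/- Let N be a nonzero co-Hopfian module over a commutative ring R. Then the direct sum M = ⨁_{i ∈ ℕ} N of countably infinitely many copies of N is semi co-Hopfian but not co-Hopfian. -/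
open Function

universe u v w

open DirectSum in
theorem directSum_semiCoHopfian_not_coHopfian {R : Type u} [CommRing R] {N : Type v}
    [AddCommGroup N] [Module R N] (hN : Nontrivial N) (hco : CoHopfian R N) :
    SemiCoHopfian R (⨁ _ : ℕ, N) ∧ ¬ CoHopfian R (⨁ _ : ℕ, N) := by
  constructor
  · intro x hinj
    refine ⟨hinj, ?_⟩
    -- multiplication by x is injective on N
    have hNinj : Function.Injective (fun n : N => x • n) := by
      intro a b hab
      have h1 : x • (DirectSum.lof R ℕ (fun _ => N) 0 a)
          = x • (DirectSum.lof R ℕ (fun _ => N) 0 b) := by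
        rw [← map_smul, ← map_smul]
        simpa using congrArg (DirectSum.lof R ℕ (fun _ => N) 0) hab
      have h2 := hinj h1
      have := congrArg (fun m : ⨁ _ : ℕ, N => m 0) h2
      simpa [DirectSum.lof_eq_of, DirectSum.of_eq_same] using this
    have hb : Function.Bijective (LinearMap.lsmul R N x) :=
      hco (LinearMap.lsmul R N x) (fun a b hab => hNinj (by simpa [LinearMap.lsmul_apply] using hab))
    set e := LinearEquiv.ofBijective (LinearMap.lsmul R N x) hb with he
    intro m
    refine ⟨DFinsupp.mapRange (fun _ n => e.symm n) (fun _ => map_zero _) m, ?_⟩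
    refine DFinsupp.ext fun i => ?_
    have h3 : (x • DFinsupp.mapRange (fun _ n => e.symm n) (fun _ => map_zero _) m) i
        = x • (e.symm (m i)) := by
      rw [DFinsupp.smul_apply, DFinsupp.mapRange_apply]
    have h4 : x • (e.symm (m i)) = e (e.symm (m i)) := rfl
    simp only [h3, h4, LinearEquiv.apply_symm_apply]
  · intro h
    set E := finsuppLEquivDirectSum R N ℕ with hE
    set f : (⨁ _ : ℕ, N) →ₗ[R] ⨁ _ : ℕ, N :=
      E.toLinearMap ∘ₗ Finsupp.lmapDomain N R (fun k : ℕ => k + 1) ∘ₗ E.symm.toLinearMap with hf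
    have hmapinj : Function.Injective
        (Finsupp.mapDomain (fun k : ℕ => k + 1) : (ℕ →₀ N) → ℕ →₀ N) :=
      Finsupp.mapDomain_injective (fun a b hab => by omega)
    have hfinj : Function.Injective f := by
      intro a b hab
      simp only [hf, LinearMap.coe_comp, Function.comp_apply, LinearEquiv.coe_coe] at hab
      have := E.injective hab
      rw [Finsupp.lmapDomain_apply, Finsupp.lmapDomain_apply] at this
      exact E.symm.injective (hmapinj this)
    obtain ⟨n, hn⟩ := exists_ne (0 : N)
    obtain ⟨m, hm⟩ := (h f hfinj).2 (E (Finsupp.single 0 n))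
    have hm' : Finsupp.mapDomain (fun k : ℕ => k + 1) (E.symm m) = Finsupp.single 0 n := by
      have := congrArg E.symm hm
      simpa [hf] using this
    have h0 : Finsupp.mapDomain (fun k : ℕ => k + 1) (E.symm m) 0 = 0 := by
      apply Finsupp.mapDomain_notin_range
      rintro ⟨a, ha⟩
      simp at ha
    rw [hm'] at h0
    simp [Finsupp.single_eq_same] at h0
    exact hn h0
end

section
/- Let R be a commutative ring and M a nonzero R-module such that the quotient ring R/Ann_R(M) is Artinian. Then M is both good and representable as an R-module. -/
open Function

universe u v w

section Aux

variable {R : Type u} [CommRing R] {M : Type v} [AddCommGroup M] [Module R M]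

lemma aux_inf_smul {I J : Ideal R} (h : IsCoprime I J) :
    (I • ⊤ : Submodule R M) ⊓ J • ⊤ = (I * J) • ⊤ := by
  refine le_antisymm ?_ (le_inf (Submodule.smul_mono_left Ideal.mul_le_left)
    (Submodule.smul_mono_left Ideal.mul_le_right))
  intro m hm
  rw [Ideal.isCoprime_iff_sup_eq] at h
  obtain ⟨u, hu, v, hv, huv⟩ := Submodule.mem_sup.mp
    (show (1 : R) ∈ I ⊔ J by rw [h]; exact Submodule.mem_top)
  have hmdecomp : m = u • m + v • m := by rw [← add_smul, huv, one_smul]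
  rw [hmdecomp]
  refine Submodule.add_mem _ ?_ ?_
  · rw [mul_smul]
    exact Submodule.smul_mem_smul hu hm.2
  · rw [mul_comm, mul_smul]
    exact Submodule.smul_mem_smul hv hm.1

lemma aux_iInf_smul {ι : Type w} [DecidableEq ι] (s : Finset ι) (p : ι → Ideal R)
    (h : (s : Set ι).Pairwise fun i j => IsCoprime (p i) (p j)) :
    (⨅ i ∈ s, (p i • ⊤ : Submodule R M)) = (∏ i ∈ s, p i) • ⊤ := by
  induction s using Finset.induction_on with
  | empty => simp [Ideal.one_eq_top]
  | @insert a s ha ih =>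
    have hsub : (s : Set ι) ⊆ (insert a s : Finset ι) :=
      Finset.coe_subset.mpr (Finset.subset_insert a s)
    have hcop : IsCoprime (p a) (∏ i ∈ s, p i) := by
      refine IsCoprime.prod_right fun j hj => ?_
      exact h (by simp) (by simp [hj]) (by rintro rfl; exact ha hj)
    rw [Finset.iInf_insert, Finset.prod_insert ha, ih (h.mono hsub), aux_inf_smul hcop]

lemma aux_inf_eq_prod {ι : Type w} [DecidableEq ι] (s : Finset ι) (p : ι → Ideal R)
    (h : (s : Set ι).Pairwise fun i j => IsCoprime (p i) (p j)) :
    (⨅ i ∈ s, p i) = ∏ i ∈ s, p i := by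
  induction s using Finset.induction_on with
  | empty => simp [Ideal.one_eq_top]
  | @insert a s ha ih =>
    have hsub : (s : Set ι) ⊆ (insert a s : Finset ι) :=
      Finset.coe_subset.mpr (Finset.subset_insert a s)
    have hcop : IsCoprime (p a) (∏ i ∈ s, p i) := by
      refine IsCoprime.prod_right fun j hj => ?_
      exact h (by simp) (by simp [hj]) (by rintro rfl; exact ha hj)
    rw [Finset.iInf_insert, ih (h.mono hsub), Finset.prod_insert ha,
      Ideal.inf_eq_mul_of_isCoprime hcop]

lemma aux_prod_comap_le {S : Type w} [CommRing S] {ι : Type*} [DecidableEq ι]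
    (s : Finset ι) (f : R →+* S) (n : ι → Ideal S) :
    (∏ i ∈ s, (n i).comap f) ≤ ((∏ i ∈ s, n i)).comap f := by
  induction s using Finset.induction_on with
  | empty => simp
  | @insert a s ha ih =>
    rw [Finset.prod_insert ha, Finset.prod_insert ha]
    calc (n a).comap f * ∏ i ∈ s, (n i).comap f
        ≤ (n a).comap f * (∏ i ∈ s, n i).comap f := Ideal.mul_mono_right ih
      _ ≤ ((n a) * ∏ i ∈ s, n i).comap f := Ideal.le_comap_mul f

lemma aux_primary {p : Ideal R} (hp : p.IsMaximal) (N : ℕ)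
    (hne : (p ^ N) • (⊤ : Submodule R M) ≠ ⊤) :
    IsPrimarySubmodule ((p ^ N) • ⊤ : Submodule R M) := by
  refine ⟨hne, fun x => ?_⟩
  by_cases hx : x ∈ p
  · right
    refine ⟨N, fun m => ?_⟩
    obtain ⟨m, rfl⟩ := Submodule.Quotient.mk_surjective _ m
    rw [← Submodule.Quotient.mk_smul, Submodule.Quotient.mk_eq_zero]
    exact Submodule.smul_mem_smul (Ideal.pow_mem_pow hx N) Submodule.mem_top
  · left
    obtain ⟨y, i, hi, hyi⟩ := hp.exists_inv hx
    have hco : IsCoprime x (i ^ N) :=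
      (show IsCoprime x i from ⟨y, 1, by rw [one_mul]; exact hyi⟩).pow_right
    obtain ⟨a, b, hab⟩ := hco
    intro m₁ m₂ h12
    simp only at h12
    obtain ⟨n₁, rfl⟩ := Submodule.Quotient.mk_surjective _ m₁
    obtain ⟨n₂, rfl⟩ := Submodule.Quotient.mk_surjective _ m₂
    rw [← Submodule.Quotient.mk_smul, ← Submodule.Quotient.mk_smul,
      Submodule.Quotient.eq] at h12
    rw [Submodule.Quotient.eq]
    have hQ : x • (n₁ - n₂) ∈ (p ^ N) • (⊤ : Submodule R M) := by
      rw [smul_sub]; exact h12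
    have hdecomp : n₁ - n₂ = (a * x) • (n₁ - n₂) + (b * i ^ N) • (n₁ - n₂) := by
      rw [← add_smul, hab, one_smul]
    rw [hdecomp]
    refine Submodule.add_mem _ ?_ ?_
    · rw [mul_smul]
      exact Submodule.smul_mem _ a hQ
    · exact Submodule.smul_mem_smul
        (Ideal.mul_mem_left _ b (Ideal.pow_mem_pow hi N)) Submodule.mem_top

lemma aux_secondary {p : Ideal R} (hp : p.IsMaximal) (N : ℕ)
    (hne : Submodule.torsionBySet R M ((p ^ N : Ideal R) : Set R) ≠ ⊥) :
    IsSecondarySubmodule (Submodule.torsionBySet R M ((p ^ N : Ideal R) : Set R)) := by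
  refine ⟨hne, fun x => ?_⟩
  by_cases hx : x ∈ p
  · right
    refine ⟨N, fun s hs => ?_⟩
    exact (Submodule.mem_torsionBySet_iff _ _).mp hs ⟨x ^ N, Ideal.pow_mem_pow hx N⟩
  · left
    obtain ⟨y, i, hi, hyi⟩ := hp.exists_inv hx
    have hco : IsCoprime x (i ^ N) :=
      (show IsCoprime x i from ⟨y, 1, by rw [one_mul]; exact hyi⟩).pow_right
    obtain ⟨a, b, hab⟩ := hco
    intro s hs
    refine ⟨a • s, Submodule.smul_mem _ a hs, ?_⟩
    have hi0 : (i ^ N) • s = 0 :=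
      (Submodule.mem_torsionBySet_iff _ _).mp hs ⟨i ^ N, Ideal.pow_mem_pow hi N⟩
    calc x • a • s = (a * x) • s := by rw [smul_smul, mul_comm]
      _ = (1 - b * i ^ N) • s := by rw [eq_sub_of_add_eq hab]
      _ = s := by rw [sub_smul, one_smul, mul_smul, hi0, smul_zero, sub_zero]

end Aux

theorem isGood_and_isRepresentable_of_artinian_quotient {R : Type u} [CommRing R]
    {M : Type v} [AddCommGroup M] [Module R M] (hM : Nontrivial M)
    (h : IsArtinianRing (R ⧸ Module.annihilator R M)) :
    IsGood R M ∧ IsRepresentable R M := by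
  classical
  haveI := h
  set I := Module.annihilator R M with hIdef
  have hIne : I ≠ ⊤ := by
    intro htop
    obtain ⟨m, m', hmm⟩ := hM
    apply hmm
    have h1 : (1 : R) ∈ I := htop ▸ Submodule.mem_top
    rw [hIdef, Module.mem_annihilator] at h1
    rw [← one_smul R m, ← one_smul R m', h1, h1]
  haveI : Nontrivial (R ⧸ I) := Ideal.Quotient.nontrivial_iff.mpr hIne
  set π : R →+* R ⧸ I := Ideal.Quotient.mk I with hπdef
  have hπ : Function.Surjective π := Ideal.Quotient.mk_surjective
  have hfin := IsArtinianRing.setOfPred_isMaximal_finite (R ⧸ I)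
  set s : Finset (Ideal (R ⧸ I)) := hfin.toFinset with hsdef
  set k := s.card with hkdef
  let e : Fin k ≃ {x // x ∈ s} := s.equivFin.symm
  let n : Fin k → Ideal (R ⧸ I) := fun j => (e j : Ideal (R ⧸ I))
  have hnmax : ∀ j, (n j).IsMaximal := fun j => hfin.mem_toFinset.mp (e j).2
  have hninj : Function.Injective n := fun a b hab => e.injective (Subtype.ext hab)
  set q : Fin k → Ideal R := fun j => (n j).comap π with hqdef
  have hqmax : ∀ j, (q j).IsMaximal := fun j => by
    haveI := hnmax j
    exact Ideal.comap_isMaximal_of_surjective π hπ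
  have hIq : ∀ j, I ≤ q j := fun j x hx => by
    show π x ∈ n j
    rw [show π x = 0 from Ideal.Quotient.eq_zero_iff_mem.mpr hx]
    exact Submodule.zero_mem _
  have hcop : ∀ a b, a ≠ b → IsCoprime (q a) (q b) := by
    intro a b hab
    have h1 : n a ⊔ n b = ⊤ :=
      (hnmax a).coprime_of_ne (hnmax b) (fun hh => hab (hninj hh))
    rw [Ideal.isCoprime_iff_sup_eq]
    rw [Ideal.eq_top_iff_one]
    obtain ⟨u, hu, v, hv, huv⟩ := Submodule.mem_sup.mp
      (show (1 : R ⧸ I) ∈ n a ⊔ n b by rw [h1]; exact Submodule.mem_top)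
    obtain ⟨u', rfl⟩ := hπ u
    have hu' : u' ∈ q a := hu
    have hv' : (1 : R) - u' ∈ q b := by
      show π (1 - u') ∈ n b
      rw [map_sub, map_one, (eq_sub_of_add_eq' huv).symm]
      exact hv
    have : (1 : R) = u' + (1 - u') := by ring
    rw [this]
    exact Submodule.add_mem_sup hu' hv'
  obtain ⟨N₀, hN₀⟩ := IsArtinianRing.isNilpotent_jacobson_bot (R := R ⧸ I)
  set N := N₀ + 1 with hNdef
  have hjac : (Ideal.jacobson (⊥ : Ideal (R ⧸ I))) ^ N = ⊥ := by
    rw [hNdef, pow_succ, hN₀]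
    simp
  have hprodn : (∏ j, n j) ≤ Ideal.jacobson (⊥ : Ideal (R ⧸ I)) := by
    rw [Ideal.jacobson]
    refine le_sInf ?_
    rintro J ⟨-, hJ⟩
    have hJs : J ∈ s := hfin.mem_toFinset.mpr hJ
    have hJn : J = n (e.symm ⟨J, hJs⟩) := by simp [n]
    rw [hJn]
    exact le_trans Ideal.prod_le_inf (Finset.inf_le (Finset.mem_univ _))
  have hqprod : (∏ j, q j) ^ N ≤ I := by
    have h1 : (∏ j, q j) ^ N ≤ ((∏ j, n j) ^ N).comap π :=
      le_trans (Ideal.pow_right_mono (aux_prod_comap_le Finset.univ π n) N)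
        (Ideal.le_comap_pow π N)
    have h2 : ((∏ j, n j) ^ N).comap π ≤ (⊥ : Ideal (R ⧸ I)).comap π := by
      refine Ideal.comap_mono ?_
      rw [← hjac]
      exact Ideal.pow_right_mono hprodn N
    have h3 : (⊥ : Ideal (R ⧸ I)).comap π = I := Ideal.mk_ker
    exact le_trans h1 (le_trans h2 (le_of_eq h3))
  set p : Fin k → Ideal R := fun j => q j ^ N with hpdef
  have hpcop : ∀ a b, a ≠ b → IsCoprime (p a) (p b) := fun a b hab => (hcop a b hab).pow
  have hprodp : (∏ j, p j) ≤ I := by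
    rw [hpdef]
    rw [Finset.prod_pow]
    exact hqprod
  have hsmulbot : ∀ {J : Ideal R}, J ≤ I → (J • ⊤ : Submodule R M) = ⊥ := by
    intro J hJ
    rw [eq_bot_iff]
    refine Submodule.smul_le.mpr fun r hr m _ => ?_
    rw [Submodule.mem_bot]
    exact Module.mem_annihilator.mp (hJ hr) m
  have hJerase : ∀ j : Fin k, ¬ (∏ l ∈ Finset.univ.erase j, p l) ≤ I := by
    intro j hle
    have hle' : (∏ l ∈ Finset.univ.erase j, p l) ≤ q j := le_trans hle (hIq j)
    obtain ⟨l, hl, hlj⟩ := ((hqmax j).isPrime.prod_le).mp hle'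
    have hql : q l ≤ q j := fun x hx =>
      (hqmax j).isPrime.mem_of_pow_mem N (hlj (Ideal.pow_mem_pow hx N))
    have hlj' : l ≠ j := (Finset.mem_erase.mp hl).1
    have hc := hcop l j hlj'
    rw [Ideal.isCoprime_iff_sup_eq, sup_eq_right.mpr hql] at hc
    exact (hqmax j).ne_top hc
  constructor
  · -- IsGood
    refine ⟨k, fun j => p j • ⊤, fun j => ?_, ?_⟩
    · refine aux_primary (hqmax j) N ?_
      intro htop
      apply hJerase j
      intro x hx
      rw [Module.mem_annihilator]
      intro m
      have hm : m ∈ (p j • ⊤ : Submodule R M) := by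
        rw [htop]; exact Submodule.mem_top
      have hxm := Submodule.smul_mem_smul hx hm
      rw [← mul_smul, Finset.prod_erase_mul _ _ (Finset.mem_univ j),
        hsmulbot hprodp] at hxm
      exact (Submodule.mem_bot R).mp hxm
    · have h1 : (⨅ j, (p j • ⊤ : Submodule R M)) = ⨅ j ∈ Finset.univ, p j • ⊤ := by simp
      rw [h1, aux_iInf_smul _ _ (fun a _ b _ hab => hpcop a b hab), hsmulbot hprodp]
  · -- IsRepresentable
    refine ⟨k, fun j => Submodule.torsionBySet R M ((p j : Ideal R) : Set R),
      fun j => ?_, ?_⟩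
    · refine aux_secondary (hqmax j) N ?_
      intro hbot
      apply hJerase j
      intro x hx
      rw [Module.mem_annihilator]
      intro m
      have hxm : x • m ∈ Submodule.torsionBySet R M ((p j : Ideal R) : Set R) := by
        rw [Submodule.mem_torsionBySet_iff]
        rintro ⟨a, ha⟩
        have hax : a * x ∈ I := by
          apply hprodp
          rw [← Finset.prod_erase_mul _ _ (Finset.mem_univ j), mul_comm]
          exact Ideal.mul_mem_mul ha hx
        rw [smul_smul]
        exact Module.mem_annihilator.mp hax m
      rw [hbot] at hxm
      exact (Submodule.mem_bot R).mp hxm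
    · have h1 : (⨆ j, Submodule.torsionBySet R M ((p j : Ideal R) : Set R))
          = ⨆ j ∈ Finset.univ, Submodule.torsionBySet R M ((p j : Ideal R) : Set R) := by
        simp
      rw [h1, Submodule.iSup_torsionBySet_ideal_eq_torsionBySet_iInf
        (fun a _ b _ hab => Ideal.isCoprime_iff_sup_eq.mp (hpcop a b hab))]
      rw [aux_inf_eq_prod _ _ (fun a _ b _ hab => hpcop a b hab)]
      rw [eq_top_iff]
      intro m _
      rw [Submodule.mem_torsionBySet_iff]
      rintro ⟨a, ha⟩
      exact Module.mem_annihilator.mp (hprodp ha) m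
end

section
/- Let R be a commutative Noetherian ring. Then every nonzero submodule of any representable R-module is representable if and only if R is Artinian. -/
open Function

universe u v w

section Aux

variable {R : Type u} [CommRing R]

/-- A Noetherian module killed by a maximal ideal is Artinian. -/
lemma aux_isArtinian_of_torsion_maximal {M : Type v} [AddCommGroup M] [Module R M]
    [IsNoetherian R M] (m : Ideal R) (hm : m.IsMaximal)
    (hM : Module.IsTorsionBySet R M m) : IsArtinian R M := by
  haveI := hm
  letI := hM.module
  haveI : IsScalarTower R (R ⧸ m) M := hM.isScalarTower
  letI : Field (R ⧸ m) := Ideal.Quotient.field m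
  haveI : IsNoetherian (R ⧸ m) M := isNoetherian_of_tower R ‹IsNoetherian R M›
  haveI : Module.Finite (R ⧸ m) M := ⟨IsNoetherian.noetherian ⊤⟩
  haveI hart : IsArtinian (R ⧸ m) M := isArtinian_of_fg_of_artinian'
  let f : Submodule R M → Submodule (R ⧸ m) M := fun N =>
    { carrier := N
      add_mem' := fun ha hb => N.add_mem ha hb
      zero_mem' := N.zero_mem
      smul_mem' := by
        intro c x hx
        obtain ⟨r, rfl⟩ := Ideal.Quotient.mk_surjective c
        have h1 : (Ideal.Quotient.mk m r) • x = r • x := hM.mk_smul r x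
        rw [h1]
        exact N.smul_mem r hx }
  let emb : Submodule R M ↪o Submodule (R ⧸ m) M :=
    OrderEmbedding.ofMapLEIff f (fun a b => Iff.rfl)
  exact ⟨(emb.ltEmbedding).wellFounded hart.wf⟩

lemma aux_isArtinian_of_list_prod (L : List (Ideal R)) (hL : ∀ m ∈ L, m.IsMaximal) :
    ∀ (M : Type v) [AddCommGroup M] [Module R M] [IsNoetherian R M],
      L.prod • (⊤ : Submodule R M) = ⊥ → IsArtinian R M := by
  induction L with
  | nil =>
    intro M _ _ _ h
    rw [List.prod_nil, Ideal.one_eq_top, Submodule.top_smul] at h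
    haveI : Subsingleton M := by
      constructor
      intro a b
      have ha : a ∈ (⊥ : Submodule R M) := h ▸ Submodule.mem_top
      have hb : b ∈ (⊥ : Submodule R M) := h ▸ Submodule.mem_top
      rw [Submodule.mem_bot] at ha hb
      rw [ha, hb]
    infer_instance
  | cons m L ih =>
    intro M _ _ _ h
    rw [List.prod_cons] at h
    set N : Submodule R M := L.prod • (⊤ : Submodule R M) with hN
    haveI hq : IsArtinian R (M ⧸ N) := by
      apply ih (fun i hi => hL i (List.mem_cons_of_mem _ hi)) (M ⧸ N)
      have h1 : (⊤ : Submodule R (M ⧸ N)) = Submodule.map N.mkQ ⊤ := by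
        rw [Submodule.map_top, Submodule.range_mkQ]
      rw [h1, ← Submodule.map_smul'']
      rw [← hN]
      apply (Submodule.eq_bot_iff _).mpr
      rintro x ⟨y, hy, rfl⟩
      rw [Submodule.mkQ_apply]
      exact (Submodule.Quotient.mk_eq_zero N).mpr hy
    haveI hs : IsArtinian R N := by
      apply aux_isArtinian_of_torsion_maximal m (hL m List.mem_cons_self)
      have hmN : m • N = ⊥ := by
        calc m • N = (m * L.prod) • (⊤ : Submodule R M) := by
              rw [hN, ← Submodule.smul_assoc, smul_eq_mul]
          _ = ⊥ := h
      intro x a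
      apply Subtype.ext
      have hmem : (a : R) • (x : M) ∈ m • N := Submodule.smul_mem_smul a.2 x.2
      rw [hmN, Submodule.mem_bot] at hmem
      simpa using hmem
    exact (isArtinian_iff_submodule_quotient N).mpr ⟨hs, hq⟩

/-- list power helper -/
def powList (l : List (Ideal R)) : ℕ → List (Ideal R)
  | 0 => []
  | n + 1 => l ++ powList l n

lemma powList_prod (l : List (Ideal R)) (n : ℕ) : (powList l n).prod = l.prod ^ n := by
  induction n with
  | zero => simp [powList]
  | succ n ih => rw [powList, List.prod_append, ih, pow_succ, mul_comm]

lemma powList_mem {l : List (Ideal R)} {n : ℕ} {I : Ideal R} (h : I ∈ powList l n) : I ∈ l := by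
  induction n with
  | zero => simp [powList] at h
  | succ n ih =>
    rw [powList, List.mem_append] at h
    exact h.elim id ih

lemma list_prod_le_of_mem : ∀ (l : List (Ideal R)) (p : Ideal R), p ∈ l → l.prod ≤ p := by
  intro l
  induction l with
  | nil => intro p hp; simp at hp
  | cons a l ih =>
    intro p hp
    rw [List.prod_cons]
    rcases List.mem_cons.mp hp with rfl | hp
    · exact Ideal.mul_le_left
    · exact le_trans Ideal.mul_le_right (ih p hp)

lemma aux_isArtinianRing_of_primes_maximal [IsNoetherianRing R]
    (H : ∀ p : Ideal R, p.IsPrime → p.IsMaximal) : IsArtinianRing R := by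
  obtain ⟨n, hn⟩ := IsNoetherianRing.isNilpotent_nilradical R
  have hfin : (minimalPrimes R).Finite := minimalPrimes.finite_of_isNoetherianRing R
  set l : List (Ideal R) := hfin.toFinset.toList with hl
  have hmeml : ∀ I ∈ l, I ∈ minimalPrimes R := by
    intro I hI
    rw [hl, Finset.mem_toList, Set.Finite.mem_toFinset] at hI
    exact hI
  have hprodle : l.prod ≤ nilradical R := by
    rw [nilradical_eq_sInf]
    apply le_sInf
    intro q hq
    haveI : q.IsPrime := hq
    obtain ⟨p0, hp0min, hp0le⟩ := Ideal.exists_minimalPrimes_le (I := ⊥) (J := q) bot_le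
    have hp0l : p0 ∈ l := by
      rw [hl, Finset.mem_toList, Set.Finite.mem_toFinset]
      exact hp0min
    exact le_trans (list_prod_le_of_mem l p0 hp0l) hp0le
  have key : IsArtinian R R := by
    apply aux_isArtinian_of_list_prod (powList l n)
    · intro m hm
      have := hmeml m (powList_mem hm)
      exact H m this.1.1
    · have hbot : (powList l n).prod = ⊥ := by
        rw [powList_prod]
        refine le_bot_iff.mp ?_
        calc l.prod ^ n ≤ (nilradical R) ^ n := Ideal.pow_right_mono hprodle n
        _ = ⊥ := hn
      rw [hbot, Submodule.bot_smul]
  exact key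

/-- Over an Artinian ring every module is representable. -/
lemma aux_isRepresentable_of_artinian [IsArtinianRing R] (M : Type v) [AddCommGroup M]
    [Module R M] : IsRepresentable R M := by
  classical
  by_cases hM : Subsingleton M
  · refine ⟨0, fun i => i.elim0, fun i => i.elim0, ?_⟩
    refine eq_top_iff.mpr fun x _ => ?_
    have : x = 0 := Subsingleton.elim x 0
    rw [this]; exact Submodule.zero_mem _
  obtain ⟨n, hn⟩ := IsArtinianRing.isNilpotent_jacobson_bot (R := R)
  have hfin : {I : Ideal R | I.IsMaximal}.Finite := IsArtinianRing.setOfPred_isMaximal_finite R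
  set s : Finset (Ideal R) := hfin.toFinset with hs
  have hmems : ∀ I, I ∈ s ↔ I.IsMaximal := by
    intro I; rw [hs, Set.Finite.mem_toFinset]; rfl
  set T : Ideal R → Submodule R M := fun I => Submodule.torsionBySet R M ((I ^ n : Ideal R) : Set R)
    with hT
  have hpair : (↑s : Set (Ideal R)).Pairwise fun I J => I ^ n ⊔ J ^ n = ⊤ := by
    intro I hI J hJ hne
    apply Ideal.pow_sup_pow_eq_top
    exact ((hmems I).mp hI).coprime_of_ne ((hmems J).mp hJ) hne
  -- the infimum of the powers is ⊥
  have hbot : (⨅ I ∈ s, I ^ n) = (⊥ : Ideal R) := by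
    refine le_bot_iff.mp ?_
    have h1 : (⨅ I ∈ s, I ^ n) ≤ ∏ I ∈ s, I ^ n := by
      have claim : ∀ t : Finset (Ideal R), t ⊆ s → t.inf (fun I => I ^ n) ≤ ∏ I ∈ t, I ^ n := by
        intro t
        induction t using Finset.induction with
        | empty => intro _; simp
        | @insert a t ha iht =>
          intro hsub
          rw [Finset.inf_insert, Finset.prod_insert ha]
          have hcop : a ^ n ⊔ ∏ I ∈ t, I ^ n = ⊤ := by
            apply Ideal.sup_prod_eq_top
            intro i hi
            exact hpair (hsub (Finset.mem_insert_self a t))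
              (hsub (Finset.mem_insert_of_mem hi)) (fun h => ha (h ▸ hi))
          calc a ^ n ⊓ t.inf (fun I => I ^ n) ≤ a ^ n ⊓ ∏ I ∈ t, I ^ n :=
                inf_le_inf le_rfl (iht (fun i hi => hsub (Finset.mem_insert_of_mem hi)))
            _ = a ^ n * ∏ I ∈ t, I ^ n := (Ideal.mul_eq_inf_of_coprime hcop).symm
      have h2 := claim s le_rfl
      rwa [Finset.inf_eq_iInf] at h2
    refine le_trans h1 ?_
    rw [Finset.prod_pow]
    refine le_trans (Ideal.pow_right_mono ?_ n) (le_of_eq hn)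
    rw [Ideal.jacobson]
    apply le_sInf
    rintro J ⟨-, hJ⟩
    exact le_trans Ideal.prod_le_inf (Finset.inf_le ((hmems J).mpr hJ))
  have hsup : ⨆ I ∈ s, T I = ⊤ := by
    rw [hT]
    rw [Submodule.iSup_torsionBySet_ideal_eq_torsionBySet_iInf hpair]
    refine (Module.isTorsionBySet_iff_torsionBySet_eq_top _).mp ?_
    rintro x ⟨b, hb⟩
    have hb' : b ∈ (⨅ I ∈ s, I ^ n : Ideal R) := hb
    rw [hbot, Ideal.mem_bot] at hb'
    show b • x = 0
    rw [hb', zero_smul]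
  -- nonzero parts
  set Jset : Set (Ideal R) := {I | I ∈ s ∧ T I ≠ ⊥} with hJset
  have hJfin : Jset.Finite := s.finite_toSet.subset (fun I hI => hI.1)
  haveI := hJfin.fintype
  let e : ↥Jset ≃ Fin (Fintype.card ↥Jset) := Fintype.equivFin ↥Jset
  refine ⟨Fintype.card ↥Jset, fun i => T ((e.symm i) : Ideal R), ?_, ?_⟩
  · intro i
    set I : Ideal R := ((e.symm i) : Ideal R) with hI
    have hImem : I ∈ s ∧ T I ≠ ⊥ := (e.symm i).2
    have hImax : I.IsMaximal := (hmems I).mp hImem.1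
    refine ⟨hImem.2, ?_⟩
    intro x
    by_cases hx : x ∈ I
    · right
      refine ⟨n, fun t ht => ?_⟩
      exact (Submodule.mem_torsionBySet_iff _ _).mp ht ⟨x ^ n, Ideal.pow_mem_pow hx n⟩
    · left
      intro u hu
      obtain ⟨y, z, hz, hyz⟩ := hImax.exists_inv hx
      set w : R := (∑ i ∈ Finset.range n, z ^ i) * y with hw
      have hxw : x * w = 1 - z ^ n := by
        have h2 : (∑ i ∈ Finset.range n, z ^ i) * (z - 1) = z ^ n - 1 := geom_sum_mul z n
        have h3 : (1 : R) - z = y * x := by linear_combination -hyz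
        rw [hw]
        linear_combination (-1 : R) * h2 - (∑ i ∈ Finset.range n, z ^ i) * h3
      refine ⟨w • u, Submodule.smul_mem _ w hu, ?_⟩
      have hzn : z ^ n • u = 0 :=
        (Submodule.mem_torsionBySet_iff _ _).mp hu ⟨z ^ n, Ideal.pow_mem_pow hz n⟩
      calc x • w • u = (x * w) • u := (mul_smul x w u).symm
        _ = (1 - z ^ n) • u := by rw [hxw]
        _ = u - z ^ n • u := by rw [sub_smul, one_smul]
        _ = u := by rw [hzn, sub_zero]
  · have h1 : ⨆ i, T ((e.symm i) : Ideal R) = ⨆ j : ↥Jset, T (j : Ideal R) :=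
      Equiv.iSup_comp (g := fun j : ↥Jset => T (j : Ideal R)) e.symm
    rw [h1]
    have h2 : ⨆ j : ↥Jset, T (j : Ideal R) = ⨆ I ∈ s, T I := by
      apply le_antisymm
      · exact iSup_le fun j => le_iSup₂_of_le (j : Ideal R) j.2.1 le_rfl
      · refine iSup₂_le fun I hI => ?_
        by_cases hTI : T I = ⊥
        · rw [hTI]; exact bot_le
        · exact le_iSup_of_le ⟨I, hI, hTI⟩ le_rfl
    rw [h2, hsup]

end Aux

theorem submodules_of_representable_iff_artinian (R : Type u) [CommRing R]
    [IsNoetherianRing R] :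
    (∀ (M : Type u) [AddCommGroup M] [Module R M], IsRepresentable R M →
      ∀ N : Submodule R M, N ≠ ⊥ → IsRepresentable R N) ↔ IsArtinianRing R := by
  constructor
  · intro h
    apply aux_isArtinianRing_of_primes_maximal
    intro p hp
    haveI := hp
    set K := FractionRing (R ⧸ p) with hK
    have halg : ∀ (r : R) (v : K),
        r • v = algebraMap (R ⧸ p) K (Ideal.Quotient.mk p r) * v := fun r v => by
      rw [Algebra.smul_def, IsScalarTower.algebraMap_apply R (R ⧸ p) K,
        Ideal.Quotient.algebraMap_eq]
    have hinj : Function.Injective (algebraMap (R ⧸ p) K) := IsFractionRing.injective _ _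
    have hrep : IsRepresentable R K := by
      refine ⟨1, fun _ => ⊤, fun i => ⟨?_, ?_⟩, iSup_const⟩
      · intro htop
        have h1 : (1 : K) ∈ (⊥ : Submodule R K) := htop ▸ Submodule.mem_top
        rw [Submodule.mem_bot] at h1
        exact one_ne_zero h1
      · intro x
        by_cases hx : x ∈ p
        · right
          refine ⟨1, fun v _ => ?_⟩
          rw [pow_one, halg, Ideal.Quotient.eq_zero_iff_mem.mpr hx, map_zero, zero_mul]
        · left
          intro v _
          have hne : algebraMap (R ⧸ p) K (Ideal.Quotient.mk p x) ≠ 0 := by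
            intro h0
            exact hx (Ideal.Quotient.eq_zero_iff_mem.mp (hinj (by rw [h0, map_zero])))
          refine ⟨(algebraMap (R ⧸ p) K (Ideal.Quotient.mk p x))⁻¹ * v, Submodule.mem_top, ?_⟩
          rw [halg, mul_inv_cancel_left₀ hne]
    set N : Submodule R K := LinearMap.range (Algebra.linearMap R K) with hN
    have hNne : N ≠ ⊥ := by
      intro hbot
      have h1 : (1 : K) ∈ N := LinearMap.mem_range.mpr ⟨1, by simp⟩
      rw [hbot, Submodule.mem_bot] at h1
      exact one_ne_zero h1
    obtain ⟨k, S, hsec, hsup⟩ := h K hrep N hNne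
    have hfield : IsField (R ⧸ p) := by
      refine ⟨exists_pair_ne _, mul_comm, ?_⟩
      intro a ha
      obtain ⟨x, rfl⟩ := Ideal.Quotient.mk_surjective a
      have hx : x ∉ p := fun hx => ha (Ideal.Quotient.eq_zero_iff_mem.mpr hx)
      -- multiplication by x on N is surjective
      set φ : ↥N →ₗ[R] ↥N := x • (LinearMap.id) with hφ
      have hall : ∀ i, S i ≤ LinearMap.range φ := by
        intro i
        rcases (hsec i).2 x with hsurj | ⟨nn, hnil⟩
        · intro u hu
          obtain ⟨t, ht, hxt⟩ := hsurj u hu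
          exact ⟨t, by simpa [hφ] using hxt⟩
        · exfalso
          obtain ⟨u, hu, hune⟩ := (Submodule.ne_bot_iff _).mp (hsec i).1
          have h0 : x ^ nn • u = 0 := hnil u hu
          have hval : x ^ nn • (u : K) = 0 := by
            have := congrArg Subtype.val h0
            simpa using this
          rw [halg, map_pow, map_pow] at hval
          rcases mul_eq_zero.mp hval with h1 | h1
          · have h2 : (Ideal.Quotient.mk p x) ^ nn = 0 := by
              apply hinj
              rw [map_pow, map_zero]
              exact h1
            have h3 : Ideal.Quotient.mk p x = 0 := by
              have hd : IsDomain (R ⧸ p) := inferInstance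
              exact pow_eq_zero_iff'.mp h2 |>.1
            exact hx (Ideal.Quotient.eq_zero_iff_mem.mp h3)
          · exact hune (by simpa using h1)
      have h1mem : (⟨1, LinearMap.mem_range.mpr ⟨1, by simp⟩⟩ : ↥N) ∈ LinearMap.range φ := by
        have htop : (⊤ : Submodule R ↥N) ≤ LinearMap.range φ := hsup ▸ iSup_le hall
        exact htop Submodule.mem_top
      obtain ⟨t, ht⟩ := h1mem
      obtain ⟨y, hy⟩ := LinearMap.mem_range.mp t.2
      refine ⟨Ideal.Quotient.mk p y, ?_⟩
      apply hinj
      rw [map_mul, map_one]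
      have hxt : x • (t : K) = 1 := by
        have := congrArg Subtype.val ht
        simpa [hφ] using this
      calc algebraMap (R ⧸ p) K (Ideal.Quotient.mk p x) * algebraMap (R ⧸ p) K (Ideal.Quotient.mk p y)
          = x • (algebraMap R K y) := by rw [halg]; rfl
        _ = x • (t : K) := by rw [show algebraMap R K y = (t : K) from hy]
        _ = 1 := hxt
    exact Ideal.Quotient.maximal_of_isField p hfield
  · intro hart M _ _ _ N _
    haveI := hart
    exact aux_isRepresentable_of_artinian (↥N)
end

section
/- Let R be a commutative Artinian ring. Then every nonzero free R-module F = ⨁_{j ∈ J} R is representable; more precisely, if Max(R) = {𝔪₁, …, 𝔪_k} and 𝔞₁, …, 𝔞_k are 𝔪_i-primary ideals with R ≅ ∏_{i=1}^k R/𝔞_i, then F is the direct sum of the submodules S_i = ⨁_{j ∈ J} R/𝔞_i, and each S_i is a 𝔪_i-secondary R-module. -/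
open Function

universe u v w

theorem aux_hopkins_aux (R : Type u) [CommRing R] [IsArtinianRing R]
    (hsr : IsSemisimpleRing (R ⧸ (⊥ : Ideal R).jacobson)) :
    ∀ (m : ℕ) (M : Type u) (_ : AddCommGroup M) (_ : Module R M) (_ : IsArtinian R M),
      ((⊥ : Ideal R).jacobson ^ m) • (⊤ : Submodule R M) = ⊥ → IsNoetherian R M := by
  set J := (⊥ : Ideal R).jacobson with hJ
  intro m
  induction m with
  | zero =>
    intro M _ _ _ h
    rw [pow_zero, Ideal.one_eq_top, Submodule.top_smul] at h
    have : Subsingleton M := (Submodule.subsingleton_iff R).mp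
      (subsingleton_of_bot_eq_top h.symm)
    exact isNoetherian_of_finite R M
  | succ m ih =>
    intro M _ _ _ h
    set N := J • (⊤ : Submodule R M) with hN
    rw [isNoetherian_iff_submodule_quotient N]
    constructor
    · apply ih N inferInstance inferInstance inferInstance
      rw [eq_bot_iff]
      apply Submodule.smul_le.mpr
      intro r hr n hn
      have h2 : r • (n : M) ∈ (J ^ (m + 1)) • (⊤ : Submodule R M) := by
        rw [pow_succ, ← smul_eq_mul, Submodule.smul_assoc]
        exact Submodule.smul_mem_smul hr n.2
      rw [h] at h2
      rw [Submodule.mem_bot]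
      exact Subtype.ext (by simpa using h2)
    · -- quotient part
      have hQ : Module.IsTorsionBySet R (M ⧸ N) (J : Set R) := by
        exact Module.isTorsionBySet_quotient_ideal_smul M J
      letI : Module (R ⧸ J) (M ⧸ N) := hQ.module
      haveI : IsSemisimpleModule (R ⧸ J) (M ⧸ N) := inferInstance
      -- transfer semisimplicity to R
      let l : (M ⧸ N) →ₛₗ[Ideal.Quotient.mk J] (M ⧸ N) :=
        { toFun := id
          map_add' := fun _ _ => rfl
          map_smul' := fun r q => (hQ.mk_smul r q).symm }
      haveI : IsSemisimpleModule R (M ⧸ N) := by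
        rw [l.isSemisimpleModule_iff_of_bijective Function.bijective_id]
        infer_instance
      have htfae := (IsSemisimpleModule.finite_tfae (R := R) (M := M ⧸ N)).out 2 1
      exact htfae.mp inferInstance
theorem aux_isReduced_quot_jacobson (R : Type u) [CommRing R] :
    IsReduced (R ⧸ (⊥ : Ideal R).jacobson) := by
  constructor
  intro x hx
  obtain ⟨y, rfl⟩ := Ideal.Quotient.mk_surjective x
  obtain ⟨n, hn⟩ := hx
  rw [← map_pow, Ideal.Quotient.eq_zero_iff_mem] at hn
  rw [Ideal.Quotient.eq_zero_iff_mem]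
  rw [Ideal.jacobson, Ideal.mem_sInf] at hn ⊢
  intro K hK
  exact hK.2.isPrime.mem_of_pow_mem n (hn hK)

theorem aux_artinian_isNoetherianRing (R : Type u) [CommRing R] [IsArtinianRing R] :
    IsNoetherianRing R := by
  have hsr : IsSemisimpleRing (R ⧸ (⊥ : Ideal R).jacobson) := by
    haveI := aux_isReduced_quot_jacobson R
    exact IsArtinianRing.isSemisimpleRing_of_isReduced (R := R ⧸ (⊥ : Ideal R).jacobson)
  obtain ⟨n, hn⟩ := IsArtinianRing.isNilpotent_jacobson_bot (R := R)
  have := aux_hopkins_aux R hsr n R inferInstance inferInstance inferInstance ?_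
  · exact this
  · rw [hn]
    exact Submodule.bot_smul ⊤


theorem aux_ker_surj_endo (R : Type u) [CommRing R] [IsNoetherianRing R] (f : R →+* R)
    (hf : Function.Surjective f) : RingHom.ker f = ⊥ := by
  let F : ℕ → (R →+* R) := fun n => Nat.rec (RingHom.id R) (fun _ g => f.comp g) n
  have hF0 : F 0 = RingHom.id R := rfl
  have hFs : ∀ n, F (n + 1) = f.comp (F n) := fun n => rfl
  have hFsurj : ∀ n, Function.Surjective (F n) := by
    intro n
    induction n with
    | zero => exact surjective_id
    | succ n ih => exact hf.comp ih
  have hmono : Monotone (fun n => RingHom.ker (F n)) := by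
    apply monotone_nat_of_le_succ
    intro n x hx
    rw [RingHom.mem_ker] at hx ⊢
    rw [hFs n, RingHom.comp_apply, hx, map_zero]
  obtain ⟨n, hn⟩ := monotone_stabilizes_iff_noetherian.mpr
    (inferInstance : IsNoetherian R R) ⟨fun n => RingHom.ker (F n), hmono⟩
  rw [eq_bot_iff]
  intro x hx
  obtain ⟨y, rfl⟩ := hFsurj n x
  have : y ∈ RingHom.ker (F (n + 1)) := by
    rw [RingHom.mem_ker, hFs n, RingHom.comp_apply]
    exact hx
  have heq : RingHom.ker (F n) = RingHom.ker (F (n + 1)) := hn (n + 1) (Nat.le_succ n)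
  rw [← heq] at this
  rw [Submodule.mem_bot]
  exact this


theorem aux_isUnit_mk {R : Type u} [CommRing R] {𝔞 𝔪 : Ideal R} (h𝔪 : 𝔪.IsMaximal)
    (hrad : 𝔞.radical = 𝔪) {x : R} (hx : x ∉ 𝔪) : IsUnit (Ideal.Quotient.mk 𝔞 x) := by
  by_contra h
  obtain ⟨I, hImax, hxI⟩ := exists_max_ideal_of_mem_nonunits h
  have hNmax : (Ideal.comap (Ideal.Quotient.mk 𝔞) I).IsMaximal :=
    Ideal.comap_isMaximal_of_surjective _ Ideal.Quotient.mk_surjective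
  have h𝔞N : 𝔞 ≤ Ideal.comap (Ideal.Quotient.mk 𝔞) I := by
    intro a ha
    simp only [Ideal.mem_comap, Ideal.Quotient.eq_zero_iff_mem.mpr ha]
    exact I.zero_mem
  have h𝔪N : 𝔪 ≤ Ideal.comap (Ideal.Quotient.mk 𝔞) I := by
    rw [← hrad, ← hNmax.isPrime.radical]
    exact Ideal.radical_mono h𝔞N
  have : 𝔪 = Ideal.comap (Ideal.Quotient.mk 𝔞) I := h𝔪.eq_of_le hNmax.ne_top h𝔪N
  exact hx (this ▸ hxI)

theorem aux_isLocalRing {R : Type u} [CommRing R] {𝔞 𝔪 : Ideal R} (h𝔞 : 𝔞 ≠ ⊤)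
    (h𝔪 : 𝔪.IsMaximal) (hrad : 𝔞.radical = 𝔪) : IsLocalRing (R ⧸ 𝔞) := by
  haveI : Nontrivial (R ⧸ 𝔞) := Ideal.Quotient.nontrivial_iff.mpr h𝔞
  apply IsLocalRing.of_isUnit_or_isUnit_one_sub_self
  intro a
  obtain ⟨y, rfl⟩ := Ideal.Quotient.mk_surjective a
  by_cases hy : y ∈ 𝔪
  · right
    have h1y : (1 : R) - y ∉ 𝔪 := fun hc => h𝔪.ne_top (Ideal.eq_top_iff_one _ |>.mpr
      (by simpa using add_mem hc hy))
    rw [← map_one (Ideal.Quotient.mk 𝔞), ← map_sub]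
    exact aux_isUnit_mk h𝔪 hrad h1y
  · exact Or.inl (aux_isUnit_mk h𝔪 hrad hy)

theorem aux_m_inj {R : Type u} [CommRing R] {k : ℕ} (𝔪 : Fin k → Ideal R)
    (h𝔪 : ∀ i, (𝔪 i).IsMaximal) (hMax : ∀ I : Ideal R, I.IsMaximal → ∃ i, I = 𝔪 i)
    (𝔞 : Fin k → Ideal R) (h𝔞top : ∀ i, 𝔞 i ≠ ⊤) (hrad : ∀ i, (𝔞 i).radical = 𝔪 i)
    (φ : R ≃+* ∀ i, R ⧸ 𝔞 i) : Function.Injective 𝔪 := by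
  haveI : ∀ i, Nontrivial (R ⧸ 𝔞 i) := fun i => Ideal.Quotient.nontrivial_iff.mpr (h𝔞top i)
  haveI : ∀ i, IsLocalRing (R ⧸ 𝔞 i) := fun i => aux_isLocalRing (h𝔞top i) (h𝔪 i) (hrad i)
  classical
  let π : ∀ i, R →+* R ⧸ 𝔞 i := fun i => (Pi.evalRingHom (fun i => R ⧸ 𝔞 i) i).comp φ.toRingHom
  have hπ : ∀ i (r : R), π i r = φ r i := fun _ _ => rfl
  have hπsurj : ∀ i, Function.Surjective (π i) := fun i y => by
    obtain ⟨r, hr⟩ := φ.surjective (Pi.single i y)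
    exact ⟨r, by rw [hπ, hr, Pi.single_eq_same]⟩
  let e : Fin k → R := fun i => φ.symm (Pi.single i 1)
  have hπe : ∀ i j, π j (e i) = Pi.single (M := fun i => R ⧸ 𝔞 i) i 1 j := fun i j => by
    rw [hπ]; rw [show e i = φ.symm (Pi.single i 1) from rfl, RingEquiv.apply_symm_apply]
  have hsum : ∑ i, e i = 1 := by
    apply φ.injective
    rw [map_sum, map_one]
    funext j
    rw [Finset.sum_apply]
    have : ∀ i, φ (e i) j = Pi.single (M := fun i => R ⧸ 𝔞 i) i 1 j := fun i => by
      rw [show e i = φ.symm (Pi.single i 1) from rfl, RingEquiv.apply_symm_apply]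
    simp_rw [this]
    simp [Pi.single_apply]
  let Mi : Fin k → Ideal R := fun i => Ideal.comap (π i) (IsLocalRing.maximalIdeal _)
  have hMimax : ∀ i, (Mi i).IsMaximal := fun i =>
    Ideal.comap_isMaximal_of_surjective _ (hπsurj i)
  have heMi : ∀ i, e i ∉ Mi i := by
    intro i hc
    have : π i (e i) ∈ IsLocalRing.maximalIdeal (R ⧸ 𝔞 i) := hc
    rw [hπe, Pi.single_eq_same] at this
    exact (IsLocalRing.maximalIdeal.isMaximal _).ne_top ((Ideal.eq_top_iff_one _).mpr this)
  have heMj : ∀ i j, i ≠ j → e i ∈ Mi j := by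
    intro i j hij
    have : π j (e i) = 0 := by rw [hπe, Pi.single_eq_of_ne (Ne.symm hij)]
    show π j (e i) ∈ IsLocalRing.maximalIdeal _
    rw [this]; exact zero_mem _
  have hMiinj : Function.Injective Mi := by
    intro i j hij
    by_contra hne
    exact heMi i (hij ▸ heMj i j hne)
  have hker : ∀ i (r : R), π i r = 0 → r * e i = 0 := by
    intro i r hr
    apply φ.injective
    rw [map_mul, map_zero]
    funext j
    rw [show φ (e i) = Pi.single i 1 from φ.apply_symm_apply _]
    rcases eq_or_ne j i with rfl | hne
    · have : φ r j = 0 := hr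
      simp [this]
    · simp [Pi.single_eq_of_ne hne]
  have hNMi : ∀ N : Ideal R, N.IsMaximal → ∃ i, N = Mi i := by
    intro N hN
    have h1 : ∃ i, e i ∉ N := by
      by_contra hc
      push_neg at hc
      have : (1 : R) ∈ N := hsum ▸ Submodule.sum_mem _ (fun i _ => hc i)
      exact hN.ne_top ((Ideal.eq_top_iff_one _).mpr this)
    obtain ⟨i, hi⟩ := h1
    refine ⟨i, hN.eq_of_le (hMimax i).ne_top ?_⟩
    intro x hx
    show π i x ∈ IsLocalRing.maximalIdeal _
    by_contra hu
    have hu' : IsUnit (π i x) := not_not.mp (fun hnu => hu hnu)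
    obtain ⟨v, hv⟩ := hu'.exists_left_inv
    obtain ⟨y, rfl⟩ := hπsurj i v
    have hyx : π i (y * x - e i) = 0 := by
      rw [map_sub, map_mul, hv, hπe, Pi.single_eq_same, sub_self]
    have hker' : y * x - e i ∈ N := by
      have h0 : (y * x - e i) * e i = 0 := hker i _ hyx
      rcases hN.isPrime.mem_or_mem (h0 ▸ N.zero_mem) with h | h
      · exact h
      · exact absurd h hi
    have : e i ∈ N := by
      have : e i = y * x - (y * x - e i) := by ring
      rw [this]
      exact sub_mem (N.mul_mem_left y hx) hker'
    exact hi this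
  -- conclude injectivity of 𝔪
  have hg : ∀ l, ∃ i, Mi l = 𝔪 i := fun l => hMax (Mi l) (hMimax l)
  choose g hg using hg
  have hginj : Function.Injective g := by
    intro l l' h
    apply hMiinj
    rw [hg l, hg l', h]
  have hgsurj : Function.Surjective g := Finite.surjective_of_injective hginj
  intro i j hij
  obtain ⟨l, rfl⟩ := hgsurj i
  obtain ⟨l', rfl⟩ := hgsurj j
  have : Mi l = Mi l' := by rw [hg l, hg l', hij]
  rw [hMiinj this]


theorem aux_nat_iso {R : Type u} [CommRing R] [IsArtinianRing R] {k : ℕ}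
    (𝔪 : Fin k → Ideal R) (h𝔪 : ∀ i, (𝔪 i).IsMaximal)
    (𝔞 : Fin k → Ideal R) (h𝔪inj : Function.Injective 𝔪)
    (hrad : ∀ i, (𝔞 i).radical = 𝔪 i)
    (φ : R ≃+* ∀ i, R ⧸ 𝔞 i) :
    Function.Bijective (Pi.ringHom fun i => Ideal.Quotient.mk (𝔞 i)) := by
  have hco : Pairwise (IsCoprime on 𝔞) := by
    intro i j hij
    have h1 : 𝔪 i ⊔ 𝔪 j = ⊤ := (h𝔪 i).coprime_of_ne (h𝔪 j) (fun h => hij (h𝔪inj h))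
    show IsCoprime (𝔞 i) (𝔞 j)
    rw [Ideal.isCoprime_iff_sup_eq]
    apply Ideal.radical_eq_top.mp
    rw [eq_top_iff, ← h1]
    apply sup_le
    · exact le_trans (hrad i).ge (Ideal.radical_mono le_sup_left)
    · exact le_trans (hrad j).ge (Ideal.radical_mono le_sup_right)
  have crt := Ideal.quotientInfRingEquivPiQuotient 𝔞 hco
  haveI : IsNoetherianRing R := aux_artinian_isNoetherianRing R
  set f : R →+* R :=
    (φ.symm.toRingHom.comp crt.toRingHom).comp (Ideal.Quotient.mk (⨅ i, 𝔞 i)) with hf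
  have hfsurj : Function.Surjective f := by
    intro y
    obtain ⟨z, hz⟩ := Ideal.Quotient.mk_surjective (crt.symm (φ y))
    refine ⟨z, ?_⟩
    show φ.symm.toRingHom (crt.toRingHom ((Ideal.Quotient.mk (⨅ i, 𝔞 i)) z)) = y
    rw [hz]
    show φ.symm (crt (crt.symm (φ y))) = y
    rw [RingEquiv.apply_symm_apply, RingEquiv.symm_apply_apply]
  have hker := aux_ker_surj_endo R f hfsurj
  have hinf : (⨅ i, 𝔞 i) = ⊥ := by
    rw [eq_bot_iff]
    intro x hx
    have : f x = 0 := by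
      rw [hf]
      simp only [RingHom.comp_apply]
      rw [Ideal.Quotient.eq_zero_iff_mem.mpr hx, map_zero, map_zero]
    have : x ∈ RingHom.ker f := this
    rw [hker] at this
    exact this
  constructor
  · intro a b hab
    have : a - b ∈ ⨅ i, 𝔞 i := by
      rw [Ideal.mem_iInf]
      intro i
      have : Ideal.Quotient.mk (𝔞 i) a = Ideal.Quotient.mk (𝔞 i) b := congrFun hab i
      rwa [← sub_eq_zero, ← map_sub, Ideal.Quotient.eq_zero_iff_mem] at this
    rw [hinf, Ideal.mem_bot, sub_eq_zero] at this
    exact this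
  · intro x
    obtain ⟨r, hr⟩ := Ideal.pi_quotient_surjective hco x
    exact ⟨r, funext fun i => (hr i).symm ▸ rfl⟩

open DirectSum in
theorem free_module_representable_of_artinian {R : Type u} [CommRing R] [IsArtinianRing R]
    (J : Type v) [Nonempty J] {k : ℕ} (𝔪 : Fin k → Ideal R)
    (h𝔪 : ∀ i, (𝔪 i).IsMaximal) (hMax : ∀ I : Ideal R, I.IsMaximal → ∃ i, I = 𝔪 i)
    (𝔞 : Fin k → Ideal R) (h𝔞 : ∀ i, (𝔞 i).IsPrimary ∧ (𝔞 i).radical = 𝔪 i)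
    (hiso : Nonempty (R ≃+* ∀ i, R ⧸ 𝔞 i)) :
    IsRepresentable R (⨁ _ : J, R) ∧
    ∃ S : Fin k → Submodule R (⨁ _ : J, R),
      DirectSum.IsInternal S ∧
      (∀ i, Nonempty ((S i) ≃ₗ[R] (⨁ _ : J, R ⧸ 𝔞 i))) ∧
      (∀ i, IsSecondarySubmodule (S i) ∧ ((S i).annihilator).radical = 𝔪 i) := by
  classical
  obtain ⟨φ⟩ := hiso
  have h𝔞top : ∀ i, 𝔞 i ≠ ⊤ := fun i => (Ideal.isPrimary_iff.mp (h𝔞 i).1).1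
  have hrad : ∀ i, (𝔞 i).radical = 𝔪 i := fun i => (h𝔞 i).2
  have h𝔪inj := aux_m_inj 𝔪 h𝔪 hMax 𝔞 h𝔞top hrad φ
  have hbij := aux_nat_iso 𝔪 h𝔪 𝔞 h𝔪inj hrad φ
  let ψ : R ≃+* ∀ i, R ⧸ 𝔞 i := RingEquiv.ofBijective _ hbij
  have hψ : ∀ (r : R) i, ψ r i = Ideal.Quotient.mk (𝔞 i) r := fun r i => rfl
  haveI : ∀ i, Nontrivial (R ⧸ 𝔞 i) := fun i => Ideal.Quotient.nontrivial_iff.mpr (h𝔞top i)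
  -- quotient smul helpers
  have hqsmul : ∀ i (x z : R),
      x • Ideal.Quotient.mk (𝔞 i) z = Ideal.Quotient.mk (𝔞 i) (x * z) := by
    intro i x z
    have h1 : Ideal.Quotient.mk (𝔞 i) (x * z)
        = Submodule.Quotient.mk (p := 𝔞 i) (x • z) := rfl
    rw [h1, Submodule.Quotient.mk_smul]
    rfl
  have hqmul : ∀ i (x : R) (q : R ⧸ 𝔞 i), x • q = Ideal.Quotient.mk (𝔞 i) x * q := by
    intro i x q
    obtain ⟨z, rfl⟩ := Ideal.Quotient.mk_surjective q
    rw [hqsmul, map_mul]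
  have hq0 : ∀ i (x : R), Ideal.Quotient.mk (𝔞 i) x = 0 → ∀ q : R ⧸ 𝔞 i, x • q = 0 := by
    intro i x hx q
    obtain ⟨z, rfl⟩ := Ideal.Quotient.mk_surjective q
    rw [hqsmul, map_mul, hx, zero_mul]
  have hq1 : ∀ i (x : R), Ideal.Quotient.mk (𝔞 i) x = 1 → ∀ q : R ⧸ 𝔞 i, x • q = q := by
    intro i x hx q
    obtain ⟨z, rfl⟩ := Ideal.Quotient.mk_surjective q
    rw [hqsmul, map_mul, hx, one_mul]
  -- the section t i : R ⧸ 𝔞 i →ₗ[R] R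
  let t : ∀ i, (R ⧸ 𝔞 i) →ₗ[R] R := fun i =>
    { toFun := fun q => ψ.symm (Pi.single i q)
      map_add' := fun a b => by rw [← map_add, ← Pi.single_add]
      map_smul' := fun r q => by
        simp only [RingHom.id_apply, smul_eq_mul]
        apply ψ.injective
        rw [map_mul, RingEquiv.apply_symm_apply, RingEquiv.apply_symm_apply]
        funext l
        rcases eq_or_ne l i with rfl | hne
        · rw [Pi.single_eq_same, Pi.mul_apply, Pi.single_eq_same, hψ]
          exact hqmul l r q
        · rw [Pi.single_eq_of_ne hne, Pi.mul_apply, Pi.single_eq_of_ne hne, mul_zero] }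
  have ht : ∀ i q, t i q = ψ.symm (Pi.single i q) := fun _ _ => rfl
  have hmkt : ∀ i q, Ideal.Quotient.mk (𝔞 i) (t i q) = q := by
    intro i q
    rw [← hψ, ht, RingEquiv.apply_symm_apply, Pi.single_eq_same]
  have hmkt0 : ∀ i j q, j ≠ i → Ideal.Quotient.mk (𝔞 j) (t i q) = 0 := by
    intro i j q hji
    rw [← hψ, ht, RingEquiv.apply_symm_apply, Pi.single_eq_of_ne hji]
  -- maps between direct sums
  let G : ∀ i, (⨁ _ : J, R ⧸ 𝔞 i) →ₗ[R] (⨁ _ : J, R) := fun i =>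
    DirectSum.toModule R J _ (fun j => (DirectSum.lof R J (fun _ => R) j).comp (t i))
  let L : ∀ i, (⨁ _ : J, R) →ₗ[R] (⨁ _ : J, R ⧸ 𝔞 i) := fun i =>
    DirectSum.toModule R J _ (fun j => (DirectSum.lof R J (fun _ => R ⧸ 𝔞 i) j).comp (𝔞 i).mkQ)
  have hGlof : ∀ i j q, G i (DirectSum.lof R J (fun _ => R ⧸ 𝔞 i) j q)
      = DirectSum.lof R J (fun _ => R) j (t i q) := by
    intro i j q
    exact DirectSum.toModule_lof (R := R) (M := fun _ : J => R ⧸ 𝔞 i) j q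
  have hLlof : ∀ i j r, L i (DirectSum.lof R J (fun _ => R) j r)
      = DirectSum.lof R J (fun _ => R ⧸ 𝔞 i) j (Ideal.Quotient.mk (𝔞 i) r) := by
    intro i j r
    exact DirectSum.toModule_lof (R := R) (M := fun _ : J => R) j r
  have hLG : ∀ i n, L i (G i n) = n := by
    intro i n
    induction n using DirectSum.induction_on with
    | zero => rw [map_zero, map_zero]
    | of j q =>
      rw [← DirectSum.lof_eq_of R, hGlof, hLlof, hmkt]
    | add a b iha ihb => rw [map_add, map_add, iha, ihb]
  have hGinj : ∀ i, Function.Injective (G i) := by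
    intro i a b hab
    have := congrArg (L i) hab
    rwa [hLG, hLG] at this
  -- smul lemmas on direct sums of quotients
  have hs0 : ∀ i (x : R), Ideal.Quotient.mk (𝔞 i) x = 0 →
      ∀ n : ⨁ _ : J, R ⧸ 𝔞 i, x • n = 0 := by
    intro i x hx n
    induction n using DirectSum.induction_on with
    | zero => rw [smul_zero]
    | of j q =>
      rw [← DirectSum.lof_eq_of R, ← map_smul, hq0 i x hx q, map_zero]
    | add a b iha ihb => rw [smul_add, iha, ihb, add_zero]
  have hs1 : ∀ i (x : R), Ideal.Quotient.mk (𝔞 i) x = 1 →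
      ∀ n : ⨁ _ : J, R ⧸ 𝔞 i, x • n = n := by
    intro i x hx n
    induction n using DirectSum.induction_on with
    | zero => rw [smul_zero]
    | of j q =>
      rw [← DirectSum.lof_eq_of R, ← map_smul, hq1 i x hx q]
    | add a b iha ihb => rw [smul_add, iha, ihb]
  -- the submodules
  set S : Fin k → Submodule R (⨁ _ : J, R) := fun i => LinearMap.range (G i) with hS
  let e : Fin k → R := fun i => t i 1
  have he1 : ∀ i, Ideal.Quotient.mk (𝔞 i) (e i) = 1 := fun i => hmkt i 1
  have he0 : ∀ i j, j ≠ i → Ideal.Quotient.mk (𝔞 j) (e i) = 0 := fun i j h => hmkt0 i j 1 h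
  have hsum_e : ∑ i, e i = 1 := by
    apply ψ.injective
    rw [map_sum, map_one]
    funext l
    rw [Finset.sum_apply]
    have hc : ∀ i, ψ (e i) l = Pi.single (M := fun i => R ⧸ 𝔞 i) i 1 l := fun i => by
      rw [show e i = ψ.symm (Pi.single i 1) from rfl, RingEquiv.apply_symm_apply]
    simp_rw [hc]
    have : (1 : ∀ i, R ⧸ 𝔞 i) l = 1 := rfl
    rw [this]
    simp [Pi.single_apply]
  have he_mem : ∀ i (m : ⨁ _ : J, R), e i • m = G i (L i m) := by
    intro i m
    induction m using DirectSum.induction_on with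
    | zero => rw [smul_zero, map_zero, map_zero]
    | of j r =>
      rw [← DirectSum.lof_eq_of R, hLlof, hGlof, ← map_smul]
      congr 1
      have h1 : Ideal.Quotient.mk (𝔞 i) r = r • (1 : R ⧸ 𝔞 i) := by
        rw [hqmul, mul_one]
      rw [h1, map_smul, smul_eq_mul, mul_comm]
      rfl
    | add a b iha ihb => rw [smul_add, map_add, map_add, iha, ihb]
  have hSe : ∀ i, ∀ s ∈ S i, e i • s = s := by
    rintro i s ⟨n, rfl⟩
    rw [← map_smul, hs1 i (e i) (he1 i) n]
  have hSe0 : ∀ i j, i ≠ j → ∀ s ∈ S j, e i • s = 0 := by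
    rintro i j hij s ⟨n, rfl⟩
    rw [← map_smul, hs0 j (e i) (he0 i j (Ne.symm hij)) n, map_zero]
  have hsup : ⨆ i, S i = ⊤ := by
    rw [eq_top_iff]
    intro m _
    have hm : m = ∑ i, e i • m := by
      rw [← Finset.sum_smul, hsum_e, one_smul]
    rw [hm]
    refine Submodule.sum_mem _ fun i _ => Submodule.mem_iSup_of_mem i ?_
    rw [he_mem i m]
    exact LinearMap.mem_range_self _ _
  have hindep : iSupIndep S := by
    intro i
    rw [Submodule.disjoint_def]
    intro x hxi hxsup
    have h1 : e i • x = x := hSe i x hxi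
    have hle : (⨆ j, ⨆ _ : j ≠ i, S j) ≤
        LinearMap.ker (LinearMap.lsmul R (⨁ _ : J, R) (e i)) := by
      refine iSup_le fun j => iSup_le fun hj s hs => ?_
      rw [LinearMap.mem_ker, LinearMap.lsmul_apply]
      exact hSe0 i j (Ne.symm hj) s hs
    have h2 := hle hxsup
    rw [LinearMap.mem_ker, LinearMap.lsmul_apply] at h2
    rw [← h1, h2]
  have hinternal : DirectSum.IsInternal S :=
    (DirectSum.isInternal_submodule_iff_iSupIndep_and_iSup_eq_top S).mpr ⟨hindep, hsup⟩
  -- nonzero element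
  obtain ⟨j₀⟩ := (inferInstance : Nonempty J)
  have hx₀ : ∀ i, G i (DirectSum.lof R J (fun _ => R ⧸ 𝔞 i) j₀ 1) ≠ 0 := by
    intro i h
    have h2 : DirectSum.lof R J (fun _ => R ⧸ 𝔞 i) j₀ (1 : R ⧸ 𝔞 i) = 0 := by
      apply hGinj i
      rw [h, map_zero]
    have h3 := congrArg (fun z => z j₀) h2
    simp only [DirectSum.lof_apply] at h3
    exact one_ne_zero h3
  -- secondary
  have hsec : ∀ i, IsSecondarySubmodule (S i) := by
    intro i
    constructor
    · rw [Submodule.ne_bot_iff]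
      exact ⟨G i (DirectSum.lof R J (fun _ => R ⧸ 𝔞 i) j₀ 1),
        LinearMap.mem_range_self _ _, hx₀ i⟩
    · intro x
      by_cases hx : x ∈ 𝔪 i
      · right
        have hxr : x ∈ (𝔞 i).radical := by rw [hrad i]; exact hx
        obtain ⟨n, hn⟩ := Ideal.mem_radical_iff.mp hxr
        refine ⟨n, ?_⟩
        rintro s ⟨m', rfl⟩
        rw [← map_smul, hs0 i (x ^ n) (Ideal.Quotient.eq_zero_iff_mem.mpr hn) m', map_zero]
      · left
        have hu := aux_isUnit_mk (h𝔪 i) (hrad i) hx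
        obtain ⟨v, hv⟩ := hu.exists_left_inv
        obtain ⟨u, rfl⟩ := Ideal.Quotient.mk_surjective v
        rintro s ⟨n, rfl⟩
        refine ⟨G i (u • n), LinearMap.mem_range_self _ _, ?_⟩
        rw [← map_smul, smul_smul]
        congr 1
        apply hs1 i (x * u)
        rw [map_mul, mul_comm]
        exact hv
  -- annihilator
  have hann : ∀ i, (S i).annihilator = 𝔞 i := by
    intro i
    apply le_antisymm
    · intro a ha
      rw [Submodule.mem_annihilator] at ha
      have h0 := ha _ (LinearMap.mem_range_self (G i)
        (DirectSum.lof R J (fun _ => R ⧸ 𝔞 i) j₀ 1))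
      rw [← map_smul, ← map_smul] at h0
      have h2 : a • (1 : R ⧸ 𝔞 i) = 0 := by
        have h3 : DirectSum.lof R J (fun _ => R ⧸ 𝔞 i) j₀ (a • (1 : R ⧸ 𝔞 i)) = 0 := by
          apply hGinj i
          rw [h0, map_zero]
        have h4 := congrArg (fun z => z j₀) h3
        simp only [DirectSum.lof_apply] at h4
        exact h4
      rw [hqmul i a 1, mul_one] at h2
      exact Ideal.Quotient.eq_zero_iff_mem.mp h2
    · intro a ha
      rw [Submodule.mem_annihilator]
      rintro s ⟨n, rfl⟩
      rw [← map_smul, hs0 i a (Ideal.Quotient.eq_zero_iff_mem.mpr ha) n, map_zero]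
  refine ⟨⟨k, S, hsec, hsup⟩, S, hinternal, ?_, fun i => ⟨hsec i, by rw [hann i]; exact hrad i⟩⟩
  intro i
  exact ⟨(LinearEquiv.ofInjective (G i) (hGinj i)).symm⟩
end

section
/- Let R be a commutative ring, E an injective cogenerator R-module, and M an R-module. If the R-module Hom_R(M, E) is semi Hopfian, then M is semi co-Hopfian. In particular, for x ∈ R, if multiplication by x is injective on M, then multiplication by x is surjective on Hom_R(M, E), and hence multiplication by x is surjective on M. -/
open Function

universe u v w

section Helpers

variable {R : Type u} [CommRing R] {E : Type v}
  [AddCommGroup E] [Module R E]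

/-- Extension lemma from `Module.Injective R E` for `Small.{v}` modules in any universe. -/
lemma vinj_ext [Module.Injective R E]
    {X : Type*} {Y : Type*} [AddCommGroup X] [Module R X] [AddCommGroup Y] [Module R Y]
    [Small.{v} X] [Small.{v} Y]
    (i : X →ₗ[R] Y) (hi : Function.Injective i) (g : X →ₗ[R] E) :
    ∃ h : Y →ₗ[R] E, ∀ a : X, h (i a) = g a := by
  let eX : Shrink.{v} X ≃ₗ[R] X := Shrink.linearEquiv R X
  let eY : Shrink.{v} Y ≃ₗ[R] Y := Shrink.linearEquiv R Y
  let i' : Shrink.{v} X →ₗ[R] Shrink.{v} Y :=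
    (eY.symm.toLinearMap.comp i).comp eX.toLinearMap
  have hi' : Function.Injective i' := by
    intro a b hab
    apply eX.injective.eq_iff.mp
    apply hi
    apply eY.symm.injective
    exact hab
  obtain ⟨h', hh'⟩ := Module.Injective.out i' hi' (g.comp eX.toLinearMap)
  refine ⟨h'.comp eY.symm.toLinearMap, fun a => ?_⟩
  have := hh' (eX.symm a)
  simp only [LinearMap.comp_apply, LinearEquiv.coe_coe, i'] at this ⊢
  rw [eX.apply_symm_apply] at this
  exact this

end Helpers

section Helpers2

variable {R : Type u} [CommRing R] {E : Type v}
  [AddCommGroup E] [Module R E]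

/-- Transport the cogenerator hypothesis to any `Small.{w}` module. -/
lemma hcog_small
    (hcog : ∀ (P : Type w) [AddCommGroup P] [Module R P], Nontrivial P →
      ∃ f : P →ₗ[R] E, f ≠ 0)
    (P : Type*) [AddCommGroup P] [Module R P] [Small.{w} P] (hP : Nontrivial P) :
    ∃ f : P →ₗ[R] E, f ≠ 0 := by
  let e : Shrink.{w} P ≃ₗ[R] P := Shrink.linearEquiv R P
  have : Nontrivial (Shrink.{w} P) := e.toEquiv.nontrivial
  obtain ⟨f', hf'⟩ := hcog (Shrink.{w} P) this
  refine ⟨f'.comp e.symm.toLinearMap, fun hzero => hf' ?_⟩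
  have : (f'.comp e.symm.toLinearMap).comp e.toLinearMap = 0 := by
    rw [hzero]; ext z; simp
  rw [← this]; ext z
  simp [LinearMap.comp_apply]

/-- `R ⧸ Ann(E)` is `v`-small. -/
lemma small_quot_ann : Small.{v} (R ⧸ Module.annihilator R E) := by
  have hker : Module.annihilator R E ≤ LinearMap.ker (LinearMap.lsmul R E) := by
    intro r hr
    rw [LinearMap.mem_ker]
    ext e
    exact Module.mem_annihilator.mp hr e
  have hinj : Function.Injective
      ((Module.annihilator R E).liftQ (LinearMap.lsmul R E) hker) := by
    rw [← LinearMap.ker_eq_bot, Submodule.ker_liftQ_eq_bot']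
    apply le_antisymm hker
    intro r hr
    rw [LinearMap.mem_ker] at hr
    rw [Module.mem_annihilator]
    intro m
    exact congrFun (congrArg (fun (φ : E →ₗ[R] E) => (φ : E → E)) hr) m
  exact small_of_injective (α := R ⧸ Module.annihilator R E) (β := E →ₗ[R] E) hinj

/-- A linear map on a cyclic module that kills the generator is zero. -/
lemma span_singleton_map_eq_zero {N : Type*} [AddCommGroup N] [Module R N]
    {T : Type*} [AddCommGroup T] [Module R T]
    (m : N) (χ : ↥(Submodule.span R ({m} : Set N)) →ₗ[R] T)
    (h0 : χ ⟨m, Submodule.mem_span_singleton_self m⟩ = 0) : χ = 0 := by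
  ext ⟨s, hs⟩
  obtain ⟨r, rfl⟩ := Submodule.mem_span_singleton.mp hs
  have : (⟨r • m, hs⟩ : ↥(Submodule.span R ({m} : Set N)))
      = r • ⟨m, Submodule.mem_span_singleton_self m⟩ := rfl
  rw [this, map_smul, h0, smul_zero]
  rfl

end Helpers2

section Torsion

variable {R : Type u} [CommRing R] {E : Type v}
  [AddCommGroup E] [Module R E]

/-- Extension along an injective map of `Ann(E)`-torsion modules (any universes),
using Baer's criterion over the small ring `R ⧸ Ann(E)`. -/
lemma torsion_ext [Module.Injective R E]
    {X : Type*} {Y : Type*} [AddCommGroup X] [Module R X] [AddCommGroup Y] [Module R Y]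
    (hX : Module.IsTorsionBySet R X ((Module.annihilator R E : Ideal R) : Set R))
    (hY : Module.IsTorsionBySet R Y ((Module.annihilator R E : Ideal R) : Set R))
    (i : X →ₗ[R] Y) (hi : Function.Injective i) (g : X →ₗ[R] E) :
    ∃ h : Y →ₗ[R] E, ∀ a : X, h (i a) = g a := by
  set J : Ideal R := Module.annihilator R E with hJdef
  letI : Small.{v} (R ⧸ J) := small_quot_ann
  have hE : Module.IsTorsionBySet R E (J : Set R) := Module.isTorsionBySet_annihilator R E
  letI mE : Module (R ⧸ J) E := hE.module
  letI mX : Module (R ⧸ J) X := hX.module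
  letI mY : Module (R ⧸ J) Y := hY.module
  have inj' : Module.Injective (R ⧸ J) E := by
    constructor
    intro X' Y' _ _ _ _ f hf g'
    letI : Module R X' := Module.compHom X' (Ideal.Quotient.mk J)
    letI : Module R Y' := Module.compHom Y' (Ideal.Quotient.mk J)
    let f' : X' →ₗ[R] Y' :=
      { toFun := f
        map_add' := f.map_add
        map_smul' := fun r x => f.map_smul (Ideal.Quotient.mk J r) x }
    let g'' : X' →ₗ[R] E :=
      { toFun := g'
        map_add' := g'.map_add
        map_smul' := fun r x => g'.map_smul (Ideal.Quotient.mk J r) x }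
    have hf' : Function.Injective f' := hf
    obtain ⟨h', hh'⟩ := Module.Injective.out f' hf' g''
    refine ⟨{ toFun := h'
              map_add' := h'.map_add
              map_smul' := ?_ }, fun x => hh' x⟩
    intro s y
    obtain ⟨r, rfl⟩ := Ideal.Quotient.mk_surjective s
    exact h'.map_smul r y
  have baer : Module.Baer (R ⧸ J) E := Module.Baer.of_injective inj'
  let i' : X →ₗ[R ⧸ J] Y :=
    { toFun := i
      map_add' := i.map_add
      map_smul' := by
        intro s xx
        obtain ⟨r, rfl⟩ := Ideal.Quotient.mk_surjective s
        exact i.map_smul r xx }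
  let gq : X →ₗ[R ⧸ J] E :=
    { toFun := g
      map_add' := g.map_add
      map_smul' := by
        intro s xx
        obtain ⟨r, rfl⟩ := Ideal.Quotient.mk_surjective s
        exact g.map_smul r xx }
  have hi' : Function.Injective i' := hi
  obtain ⟨H, hH⟩ := Module.Baer.extension_property baer i' hi' gq
  refine ⟨{ toFun := H
            map_add' := H.map_add
            map_smul' := fun r y => H.map_smul (Ideal.Quotient.mk J r) y }, fun a => ?_⟩
  show H (i' a) = gq a
  rw [← LinearMap.comp_apply, hH]

end Torsion

section FLemma

variable {R : Type u} [CommRing R] {E : Type v}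
  [AddCommGroup E] [Module R E]

universe y'

/-- Key lemma: if the cyclic module generated by `y` is `v`-small, then the
annihilator of `E` kills `y`. -/
lemma ann_smul_eq_zero [Module.Injective R E]
    (hcog : ∀ (P : Type w) [AddCommGroup P] [Module R P], Nontrivial P →
      ∃ f : P →ₗ[R] E, f ≠ 0)
    {Y : Type y'} [AddCommGroup Y] [Module R Y]
    (trans : ∀ (T : Type y'), Small.{v} T → Small.{w} T)
    (y : Y) (hy : Small.{v} ↥(Submodule.span R ({y} : Set Y)))
    {j : R} (hj : j ∈ Module.annihilator R E) : j • y = 0 := by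
  by_contra hne
  set S1 := Submodule.span R ({j • y} : Set Y) with hS1
  set S2 := Submodule.span R ({y} : Set Y) with hS2
  have hle : S1 ≤ S2 := by
    rw [hS1, Submodule.span_le]
    intro t ht
    rw [Set.mem_singleton_iff] at ht
    subst ht
    exact Submodule.smul_mem _ j (Submodule.mem_span_singleton_self y)
  letI : Small.{v} ↥S2 := hy
  letI : Small.{v} ↥S1 :=
    small_of_injective (Submodule.inclusion_injective hle)
  letI : Small.{w} ↥S1 := trans _ ‹Small.{v} ↥S1›
  have hnt : Nontrivial ↥S1 := by
    refine ⟨⟨⟨j • y, Submodule.mem_span_singleton_self _⟩, 0, ?_⟩⟩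
    intro hzero
    exact hne (congrArg Subtype.val hzero)
  obtain ⟨χ, hχ⟩ := hcog_small hcog ↥S1 hnt
  have hgen : χ ⟨j • y, Submodule.mem_span_singleton_self _⟩ ≠ 0 := by
    intro h0
    exact hχ (span_singleton_map_eq_zero _ χ h0)
  obtain ⟨h, hh⟩ := vinj_ext (Submodule.inclusion hle)
    (Submodule.inclusion_injective hle) χ
  have := hh ⟨j • y, Submodule.mem_span_singleton_self _⟩
  have heq : (Submodule.inclusion hle) ⟨j • y, Submodule.mem_span_singleton_self _⟩
      = j • (⟨y, Submodule.mem_span_singleton_self _⟩ : ↥S2) := rfl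
  rw [heq] at this
  rw [map_smul] at this
  have hzero : j • h ⟨y, Submodule.mem_span_singleton_self _⟩ = 0 :=
    Module.mem_annihilator.mp hj _
  rw [hzero] at this
  exact hgen this.symm

end FLemma

section SqLemma

variable {R : Type u} [CommRing R] {E : Type v}
  [AddCommGroup E] [Module R E]

lemma ann_le_sq [Module.Injective R E]
    (hcog : ∀ (P : Type w) [AddCommGroup P] [Module R P], Nontrivial P →
      ∃ f : P →ₗ[R] E, f ≠ 0)
    (transu : ∀ (T : Type u), Small.{v} T → Small.{w} T) :
    (Module.annihilator R E : Ideal R) ≤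
      (Module.annihilator R E) * (Module.annihilator R E) := by
  set J : Ideal R := Module.annihilator R E with hJdef
  intro j hjJ
  by_contra hjnot
  -- Zorn: maximal submodule of R containing J*J and avoiding j
  obtain ⟨𝒟, h𝒟0, hmax⟩ := zorn_le_nonempty₀
      {D : Submodule R R | (J * J : Ideal R) ≤ D ∧ j ∉ D}
      (by
        intro c hcs hchain y hyc
        haveI : Nonempty ↥c := ⟨⟨y, hyc⟩⟩
        refine ⟨sSup c, ⟨?_, ?_⟩, fun z hz => le_sSup hz⟩
        · exact le_trans (hcs hyc).1 (le_sSup hyc)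
        · intro hjmem
          rw [sSup_eq_iSup'] at hjmem
          obtain ⟨⟨D, hDc⟩, hjD⟩ :=
            (Submodule.mem_iSup_of_directed _ hchain.directed).mp hjmem
          exact (hcs hDc).2 hjD)
      (J * J) ⟨le_refl _, hjnot⟩
  obtain ⟨hsq𝒟, hjn𝒟⟩ := hmax.1
  -- the image of J in R ⧸ 𝒟
  set V : Submodule R (R ⧸ 𝒟) := Submodule.map 𝒟.mkQ (J : Submodule R R) with hVdef
  have hzmem : 𝒟.mkQ j ∈ V := Submodule.mem_map_of_mem hjJ
  set zV : ↥V := ⟨𝒟.mkQ j, hzmem⟩ with hzVdef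
  have hzV0 : zV ≠ 0 := by
    intro h0
    apply hjn𝒟
    have : 𝒟.mkQ j = 0 := congrArg Subtype.val h0
    rwa [Submodule.mkQ_apply, Submodule.Quotient.mk_eq_zero] at this
  -- V is J-torsion
  have hVtor : Module.IsTorsionBySet R (↥V) (J : Set R) := by
    intro vv a
    obtain ⟨s, hsJ, hs⟩ := Submodule.mem_map.mp vv.2
    apply Subtype.ext
    show (a : R) • (vv : R ⧸ 𝒟) = 0
    rw [← hs, ← map_smul, Submodule.mkQ_apply, Submodule.Quotient.mk_eq_zero]
    rw [smul_eq_mul]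
    exact hsq𝒟 (Ideal.mul_mem_mul a.2 hsJ)
  -- the cyclic submodule generated by zV
  set SV : Submodule R ↥V := Submodule.span R ({zV} : Set ↥V) with hSVdef
  have hgenmem : zV ∈ SV := Submodule.mem_span_singleton_self zV
  -- SV is v-small via a surjection from R ⧸ J
  have hJker : (J : Submodule R R) ≤ LinearMap.ker
      (LinearMap.toSpanSingleton R ↥SV ⟨zV, hgenmem⟩) := by
    intro a haJ
    rw [LinearMap.mem_ker, LinearMap.toSpanSingleton_apply]
    have h1 : a • zV = 0 := hVtor (x := zV) (a := ⟨a, haJ⟩)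
    apply Subtype.ext
    show a • zV = 0
    exact h1
  have hsurjSV : Function.Surjective
      (Submodule.liftQ (R := R) (M := R) (M₂ := ↥SV) (J : Submodule R R) (LinearMap.toSpanSingleton R ↥SV ⟨zV, hgenmem⟩) hJker) := by
    rintro ⟨sv, hsv⟩
    obtain ⟨r, hr⟩ := Submodule.mem_span_singleton.mp hsv
    refine ⟨Submodule.Quotient.mk r, ?_⟩
    rw [Submodule.liftQ_apply, LinearMap.toSpanSingleton_apply]
    apply Subtype.ext
    exact hr
  letI : Small.{v} (R ⧸ (J : Submodule R R)) := small_quot_ann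
  letI hSVsmallv : Small.{v} ↥SV := small_of_surjective hsurjSV
  letI : Small.{w} ↥SV := transu _ hSVsmallv
  have hSVnt : Nontrivial ↥SV := by
    refine ⟨⟨⟨zV, hgenmem⟩, 0, ?_⟩⟩
    intro h0
    exact hzV0 (congrArg Subtype.val h0)
  obtain ⟨χ, hχ⟩ := hcog_small hcog ↥SV hSVnt
  have hχgen : χ ⟨zV, hgenmem⟩ ≠ 0 := by
    intro h0
    exact hχ (span_singleton_map_eq_zero _ χ h0)
  -- SV is J-torsion as well
  have hSVtor : Module.IsTorsionBySet R (↥SV) (J : Set R) := by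
    intro xx a
    apply Subtype.ext
    show (a : R) • (xx : ↥V) = 0
    exact hVtor (x := (xx : ↥V)) (a := a)
  -- extend χ to all of V
  obtain ⟨φ, hφ⟩ := torsion_ext (X := ↥SV) (Y := ↥V) hSVtor hVtor SV.subtype Subtype.val_injective χ
  have hφz : φ zV ≠ 0 := by
    have := hφ ⟨zV, hgenmem⟩
    rw [Submodule.subtype_apply] at this
    rw [this]
    exact hχgen
  -- φ is injective: V is "cocyclic" around zV by maximality of 𝒟
  have hφinj : Function.Injective φ := by
    rw [← LinearMap.ker_eq_bot, Submodule.eq_bot_iff]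
    intro uu huu
    rw [LinearMap.mem_ker] at huu
    by_contra hu0
    obtain ⟨ww, hwJ, hw⟩ := Submodule.mem_map.mp uu.2
    have hwn𝒟 : ww ∉ 𝒟 := by
      intro hmem
      apply hu0
      apply Subtype.ext
      show (uu : R ⧸ 𝒟) = 0
      rw [← hw, Submodule.mkQ_apply, Submodule.Quotient.mk_eq_zero]
      exact hmem
    have hjmem : j ∈ 𝒟 ⊔ Submodule.span R ({ww} : Set R) := by
      by_contra hjn
      have hD' : (𝒟 ⊔ Submodule.span R ({ww} : Set R)) ∈
          {D : Submodule R R | (J * J : Ideal R) ≤ D ∧ j ∉ D} :=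
        ⟨le_trans hsq𝒟 le_sup_left, hjn⟩
      have hle' := hmax.2 hD' le_sup_left
      apply hwn𝒟
      exact hle' (Submodule.mem_sup_right (Submodule.mem_span_singleton_self ww))
    obtain ⟨d, hd𝒟, e, he, hde⟩ := Submodule.mem_sup.mp hjmem
    obtain ⟨r, hr⟩ := Submodule.mem_span_singleton.mp he
    have hval : (zV : R ⧸ 𝒟) = r • (uu : R ⧸ 𝒟) := by
      show 𝒟.mkQ j = r • (uu : R ⧸ 𝒟)
      rw [← hw, ← hde, map_add, ← hr, map_smul]
      have hd0 : 𝒟.mkQ d = 0 := by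
        rw [Submodule.mkQ_apply, Submodule.Quotient.mk_eq_zero]
        exact hd𝒟
      rw [hd0, zero_add]
    have : zV = r • uu := Subtype.ext hval
    rw [this, map_smul, huu, smul_zero] at hφz
    exact hφz rfl
  letI hVsmallv : Small.{v} ↥V := small_of_injective hφinj
  -- now R ⧸ 𝒟 is v-small
  letI : Small.{v} (R ⧸ 𝒟) := by
    set ψ : (R ⧸ 𝒟) →ₗ[R] (R ⧸ (𝒟 ⊔ (J : Submodule R R))) :=
      Submodule.liftQ 𝒟 (𝒟 ⊔ (J : Submodule R R)).mkQ
        (by rw [Submodule.ker_mkQ]; exact le_sup_left) with hψdef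
    have hψsurj : Function.Surjective ψ := by
      intro t
      obtain ⟨r, rfl⟩ := Submodule.mkQ_surjective _ t
      exact ⟨Submodule.Quotient.mk r, by rw [hψdef, Submodule.liftQ_apply]⟩
    have hkerV : ∀ t : R ⧸ 𝒟, ψ t = 0 → t ∈ V := by
      intro t ht
      obtain ⟨r, rfl⟩ := Submodule.mkQ_surjective _ t
      rw [hψdef, Submodule.mkQ_apply, Submodule.liftQ_apply, Submodule.mkQ_apply,
        Submodule.Quotient.mk_eq_zero] at ht
      obtain ⟨d, hd, e, he, hde⟩ := Submodule.mem_sup.mp ht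
      rw [hVdef]
      refine ⟨e, he, ?_⟩
      rw [Submodule.mkQ_apply, Submodule.mkQ_apply, ← hde]
      rw [Submodule.Quotient.mk_add (p := 𝒟)]
      rw [(Submodule.Quotient.mk_eq_zero 𝒟).mpr hd, zero_add]
    let σ' := Function.surjInv hψsurj
    have hσ' : ∀ t', ψ (σ' t') = t' := fun t' => Function.surjInv_eq hψsurj t'
    let Φ : (R ⧸ 𝒟) → (R ⧸ (𝒟 ⊔ (J : Submodule R R))) × ↥V := fun t =>
      (ψ t, ⟨t - σ' (ψ t), hkerV _ (by rw [map_sub, hσ', sub_self])⟩)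
    have hΦinj : Function.Injective Φ := by
      intro t t' h
      have h1 : ψ t = ψ t' := congrArg Prod.fst h
      have h2 : t - σ' (ψ t) = t' - σ' (ψ t') :=
        congrArg Subtype.val (congrArg Prod.snd h)
      rw [h1] at h2
      exact sub_left_injective h2
    haveI : Small.{v} (R ⧸ (𝒟 ⊔ (J : Submodule R R))) := by
      have hsurj2 : Function.Surjective
          (Submodule.liftQ (J : Submodule R R) (𝒟 ⊔ (J : Submodule R R)).mkQ
            (by rw [Submodule.ker_mkQ]; exact le_sup_right)) := by
        intro t
        obtain ⟨r, rfl⟩ := Submodule.mkQ_surjective _ t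
        exact ⟨Submodule.Quotient.mk r, by rw [Submodule.liftQ_apply]⟩
      exact small_of_surjective hsurj2
    exact small_of_injective hΦinj
  -- apply the key lemma to the class of 1 in R ⧸ 𝒟
  have hone : j • (𝒟.mkQ (1 : R)) = 0 := by
    apply ann_smul_eq_zero hcog transu (𝒟.mkQ (1 : R))
      (small_of_injective (Subtype.val_injective
        (p := fun t => t ∈ Submodule.span R ({𝒟.mkQ (1 : R)} : Set (R ⧸ 𝒟)))))
      hjJ
  apply hjn𝒟
  rw [← map_smul, Submodule.mkQ_apply, Submodule.Quotient.mk_eq_zero] at hone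
  simpa using hone

end SqLemma

section TorsionM

variable {R : Type u} [CommRing R] {E : Type v}
  [AddCommGroup E] [Module R E]

lemma torsion_of_M [Module.Injective R E]
    (hcog : ∀ (P : Type w) [AddCommGroup P] [Module R P], Nontrivial P →
      ∃ f : P →ₗ[R] E, f ≠ 0)
    (transu : ∀ (T : Type u), Small.{v} T → Small.{w} T)
    {M : Type w} [AddCommGroup M] [Module R M] :
    Module.IsTorsionBySet R M ((Module.annihilator R E : Ideal R) : Set R) := by
  set J : Ideal R := Module.annihilator R E with hJdef
  set JM : Submodule R M := J • (⊤ : Submodule R M) with hJMdef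
  have hsq : J ≤ J * J := ann_le_sq hcog transu
  have hJM2 : JM ≤ J • JM := by
    rw [hJMdef]
    calc J • (⊤ : Submodule R M) ≤ (J * J) • (⊤ : Submodule R M) :=
          Submodule.smul_mono_left hsq
    _ = (J • J) • (⊤ : Submodule R M) := by rw [Ideal.smul_eq_mul]
    _ = J • (J • (⊤ : Submodule R M)) := Submodule.smul_assoc J J ⊤
  have hbot : JM = ⊥ := by
    by_contra hne
    have hnt : Nontrivial ↥JM := Submodule.nontrivial_iff_ne_bot.mpr hne
    haveI : Small.{w} ↥JM := small_of_injective
      (Subtype.val_injective (p := fun m => m ∈ JM))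
    obtain ⟨φ, hφ⟩ := hcog_small hcog ↥JM hnt
    apply hφ
    ext ⟨a, ha⟩
    have ha' : a ∈ J • JM := hJM2 ha
    have key : φ ⟨a, Submodule.smul_le_right ha'⟩ = 0 := by
      refine Submodule.smul_induction_on'
        (p := fun m hm => φ ⟨m, Submodule.smul_le_right hm⟩ = 0) ha' ?_ ?_
      · intro r hr n hn
        have hco : (⟨r • n, Submodule.smul_le_right (Submodule.smul_mem_smul hr hn)⟩ : ↥JM)
            = r • (⟨n, hn⟩ : ↥JM) := rfl
        rw [hco, map_smul]
        exact Module.mem_annihilator.mp hr _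
      · intro x hx y hy ihx ihy
        have hco : (⟨x + y, Submodule.smul_le_right (Submodule.add_mem _ hx hy)⟩ : ↥JM)
            = (⟨x, Submodule.smul_le_right hx⟩ : ↥JM) + ⟨y, Submodule.smul_le_right hy⟩ := rfl
        rw [hco, map_add, ihx, ihy, add_zero]
    simpa using key
  intro m a
  have : (a : R) • m ∈ JM := by
    rw [hJMdef]
    exact Submodule.smul_mem_smul a.2 Submodule.mem_top
  rw [hbot] at this
  simpa using this

end TorsionM

theorem semiCoHopfian_of_dual_semiHopfian {R : Type u} [CommRing R] {E : Type v}
    [AddCommGroup E] [Module R E] [Module.Injective R E]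
    (hcog : ∀ (P : Type w) [AddCommGroup P] [Module R P], Nontrivial P →
      ∃ f : P →ₗ[R] E, f ≠ 0)
    (M : Type w) [AddCommGroup M] [Module R M]
    (hsh : SemiHopfian R (M →ₗ[R] E)) :
    SemiCoHopfian R M ∧
    ∀ x : R, Function.Injective (fun m : M => x • m) →
      Function.Surjective (fun f : M →ₗ[R] E => x • f) ∧
      Function.Surjective (fun m : M => x • m) := by
  classical
  have key : ∀ x : R, Function.Injective (fun m : M => x • m) →
      Function.Surjective (fun f : M →ₗ[R] E => x • f) ∧
      Function.Surjective (fun m : M => x • m) := by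
    intro x hx
    set ℓ : M →ₗ[R] M := x • (LinearMap.id : M →ₗ[R] M) with hℓdef
    have hℓinj : Function.Injective ℓ := hx
    have surjHom : Function.Surjective (fun f : M →ₗ[R] E => x • f) := by
      intro f
      have hext : ∃ h : M →ₗ[R] E, ∀ a : M, h (ℓ a) = f a := by
        rcases em (Small.{v} M) with hsmall | hbig
        · haveI := hsmall
          exact vinj_ext ℓ hℓinj f
        · have transv : ∀ (α : Type v), Small.{w} α := by
            intro α
            rcases le_total (Cardinal.lift.{w} (Cardinal.mk α))
                (Cardinal.lift.{v} (Cardinal.mk M)) with h | h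
            · obtain ⟨emb⟩ := Cardinal.lift_mk_le'.mp h
              exact small_of_injective emb.injective
            · obtain ⟨emb⟩ := Cardinal.lift_mk_le'.mp h
              exact absurd (small_of_injective emb.injective) hbig
          have transu : ∀ (T : Type u), Small.{v} T → Small.{w} T := by
            intro T hT
            haveI := hT
            exact (small_congr (equivShrink.{v} T)).mpr (transv (Shrink.{v} T))
          have htor := torsion_of_M (E := E) hcog transu (M := M)
          exact torsion_ext htor htor ℓ hℓinj f
      obtain ⟨h, hh⟩ := hext
      refine ⟨h, ?_⟩
      ext m
      show x • h m = f m
      rw [← map_smul]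
      exact hh m
    have bijHom := hsh x surjHom
    have injHom : Function.Injective (fun f : M →ₗ[R] E => x • f) := bijHom.1
    have surjM : Function.Surjective (fun m : M => x • m) := by
      by_contra hns
      rw [Function.Surjective] at hns
      push_neg at hns
      obtain ⟨m₀, hm₀⟩ := hns
      have hm₀mem : m₀ ∉ LinearMap.range ℓ := by
        rintro ⟨a, haa⟩
        exact hm₀ a haa
      have hnz : Submodule.Quotient.mk (p := LinearMap.range ℓ) m₀ ≠ 0 := by
        rw [Ne, Submodule.Quotient.mk_eq_zero]
        exact hm₀mem
      have hnt : Nontrivial (M ⧸ LinearMap.range ℓ) := ⟨⟨_, 0, hnz⟩⟩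
      obtain ⟨fbar, hfbar⟩ := hcog (M ⧸ LinearMap.range ℓ) hnt
      have hzero : x • (fbar ∘ₗ (LinearMap.range ℓ).mkQ) = x • (0 : M →ₗ[R] E) := by
        rw [smul_zero]
        ext m
        show x • fbar ((LinearMap.range ℓ).mkQ m) = 0
        rw [← map_smul, ← map_smul]
        have hq : (LinearMap.range ℓ).mkQ (x • m) = 0 := by
          rw [Submodule.mkQ_apply, Submodule.Quotient.mk_eq_zero]
          exact ⟨m, rfl⟩
        rw [hq, map_zero]
      have hcomp := injHom hzero
      apply hfbar
      have hfz : ∀ m : M, fbar ((LinearMap.range ℓ).mkQ m) = 0 := by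
        intro m
        have : (fbar ∘ₗ (LinearMap.range ℓ).mkQ) m = 0 := by rw [hcomp]; rfl
        exact this
      ext nn
      simpa using hfz nn
    exact ⟨surjHom, surjM⟩
  refine ⟨?_, key⟩
  intro x hx
  exact ⟨hx, (key x hx).2⟩
end
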